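/- arXiv:2604.08776 — 9 statements merged into one kernel-verified Lean document; each statement's English description precedes it below -/
import Mathlib

section
/- Two matrices A, B ∈ GL₂(ℤ_p) are conjugate in GL₂(ℤ_p) if and only if they have the same characteristic polynomial and μ(A) = μ(B), where μ(A) is the largest μ ∈ ℤ ∪ {∞} such that A is congruent to a scalar matrix modulo p^μ. -/
/-!
If `A` is not scalar, write `A = α + p^μ A'` with `μ = μ(A)`, so that `A'` is not scalar mod `p`.
A `2 × 2` matrix over a local ring that is not scalar modulo the maximal ideal has a cyclic
vector, hence is conjugate to the companion matrix of its characteristic polynomial. If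
`B = β + p^μ B'` has the same characteristic polynomial as `A`, evaluating it at `β` gives
`(β - α) (β - α - p^μ tr A') ≡ 0 (mod p^{2μ})`, whence `p^μ ∣ β - α` and we may take `β = α`.
Then `A'` and `B'` have the same characteristic polynomial and are both conjugate to its
companion matrix. If `μ(A) = μ(B) = ∞`, both matrices are scalar, and a scalar is determined by
its trace and determinant.
-/

open IsLocalRing

theorem Units.isConj_coe_iff {M : Type*} [Monoid M] {a b : Mˣ} :
    IsConj (a : M) b ↔ IsConj a b :=
  ⟨fun ⟨c, hc⟩ => ⟨toUnits c, Units.ext hc⟩, fun h => (Units.coeHom M).map_isConj h⟩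

theorem Prime.pow_dvd_of_pow_dvd_mul_sub {R : Type*} [CommRing R] [IsDomain R] {π : R}
    (hπ : Prime π) {d t : R} (μ : ℕ) (h : π ^ (2 * μ) ∣ d * (d - π ^ μ * t)) : π ^ μ ∣ d := by
  induction μ generalizing d with
  | zero => simp
  | succ μ ih =>
    obtain ⟨d, rfl⟩ : π ∣ d := by
      rcases hπ.dvd_or_dvd ((dvd_pow_self π (by lia)).trans h) with hd | hd
      · exact hd
      · simpa using dvd_add hd (dvd_mul_of_dvd_left (dvd_pow_self π μ.succ_ne_zero) t)
    have h : π ^ 2 * π ^ (2 * μ) ∣ π ^ 2 * (d * (d - π ^ μ * t)) := by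
      convert h using 1 <;> ring
    rw [pow_succ']
    exact mul_dvd_mul_left π (ih ((mul_dvd_mul_iff_left (pow_ne_zero 2 hπ.ne_zero)).mp h))

theorem eq_zero_of_forall_pow_dvd {R : Type*} [CommMonoidWithZero R] [IsCancelMulZero R]
    [WfDvdMonoid R] {ϖ x : R} (hϖ : ¬IsUnit ϖ) (h : ∀ n, ϖ ^ n ∣ x) : x = 0 := by
  by_contra hx
  obtain ⟨n, hn⟩ := FiniteMultiplicity.of_not_isUnit hϖ hx
  exact hn (h (n + 1))

namespace Matrix

variable {R : Type*} [CommRing R]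

section IsScalarMod

variable {n : Type*} [DecidableEq n] {q : R} {M N : Matrix n n R}

def IsScalarMod (q : R) (M : Matrix n n R) : Prop :=
  ∃ α : R, ∀ i j, q ∣ M i j - (α • (1 : Matrix n n R)) i j

theorem isScalarMod_iff_exists_eq_smul_one_add :
    IsScalarMod q M ↔ ∃ (α : R) (N : Matrix n n R), M = α • 1 + q • N := by
  constructor
  · rintro ⟨α, h⟩
    choose N hN using h
    refine ⟨α, of N, ?_⟩
    ext i j
    simp [← hN]
  · rintro ⟨α, N, rfl⟩
    exact ⟨α, fun i j => ⟨N i j, by simp⟩⟩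

theorem IsScalarMod.smul_one_add {π : R} (h : IsScalarMod π N) (α q : R) :
    IsScalarMod (q * π) (α • 1 + q • N) := by
  obtain ⟨γ, N', rfl⟩ := isScalarMod_iff_exists_eq_smul_one_add.mp h
  exact isScalarMod_iff_exists_eq_smul_one_add.mpr ⟨α + q * γ, N', by module⟩

theorem isScalarMod_smul_one_add_iff (α : R) :
    IsScalarMod q (α • 1 + N) ↔ IsScalarMod q N := by
  simp only [isScalarMod_iff_exists_eq_smul_one_add]
  constructor
  · rintro ⟨γ, N', h⟩
    exact ⟨γ - α, N', by rw [eq_sub_of_add_eq' h]; module⟩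
  · rintro ⟨γ, N', rfl⟩
    exact ⟨α + γ, N', by module⟩

theorem exists_eq_smul_one_add_not_isScalarMod {π : R} (h : IsScalarMod q M)
    (h' : ¬IsScalarMod (q * π) M) : ∃ (α : R) (N : Matrix n n R),
      M = α • 1 + q • N ∧ ¬IsScalarMod π N := by
  obtain ⟨α, N, rfl⟩ := isScalarMod_iff_exists_eq_smul_one_add.mp h
  exact ⟨α, N, rfl, fun hN => h' (hN.smul_one_add α q)⟩

theorem exists_isScalarMod_pow_not_succ (h : ¬∀ m : ℕ, IsScalarMod (q ^ m) M) :
    ∃ μ : ℕ, IsScalarMod (q ^ μ) M ∧ ¬IsScalarMod (q ^ (μ + 1)) M := by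
  by_contra! h'
  refine h fun m => ?_
  induction m with
  | zero => exact ⟨0, fun _ _ => by simp⟩
  | succ m ih => exact h' m ih

variable [Fintype n]

theorem IsScalarMod.of_isConj (h : IsScalarMod q M) (hMN : IsConj M N) : IsScalarMod q N := by
  obtain ⟨c, hc⟩ := hMN
  obtain ⟨α, K, rfl⟩ := isScalarMod_iff_exists_eq_smul_one_add.mp h
  refine isScalarMod_iff_exists_eq_smul_one_add.mpr ⟨α, c.val * K * c⁻¹.val, ?_⟩
  rw [(Units.eq_mul_inv_iff_mul_eq c).mpr hc.eq.symm]
  simp [mul_add, add_mul, mul_assoc]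

theorem IsConj.smul_one_add (h : IsConj M N) (α q : R) :
    IsConj (α • 1 + q • M) (α • 1 + q • N) := by
  obtain ⟨c, hc⟩ := h
  exact ⟨c, ((SemiconjBy.one_right _).smul_right α).add_right (hc.smul_right q)⟩

theorem charpoly_eq_of_isConj (h : IsConj M N) : M.charpoly = N.charpoly := by
  obtain ⟨c, hc⟩ := h
  rw [(Units.eq_mul_inv_iff_mul_eq c).mpr hc.eq.symm, charpoly_mul_comm, Units.inv_mul_cancel_left]

end IsScalarMod

section FinTwo

variable {M N : Matrix (Fin 2) (Fin 2) R}

theorem isScalarMod_fin_two_iff {q : R} :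
    IsScalarMod q M ↔ q ∣ M 0 1 ∧ q ∣ M 1 0 ∧ q ∣ M 1 1 - M 0 0 := by
  constructor
  · rintro ⟨α, h⟩
    refine ⟨by simpa using h 0 1, by simpa using h 1 0, ?_⟩
    simpa using dvd_sub (h 1 1) (h 0 0)
  · rintro ⟨h01, h10, h11⟩
    refine ⟨M 0 0, fun i j => ?_⟩
    fin_cases i <;> fin_cases j <;> simp [*]

theorem trace_smul_one_add_smul (α q : R) (N : Matrix (Fin 2) (Fin 2) R) :
    trace (α • 1 + q • N) = 2 * α + q * trace N := by
  simp [trace_fin_two]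
  ring

theorem det_smul_one_add_smul (α q : R) (N : Matrix (Fin 2) (Fin 2) R) :
    det (α • 1 + q • N) = α ^ 2 + α * q * trace N + q ^ 2 * det N := by
  simp [det_fin_two, trace_fin_two]
  ring

theorem isConj_companion_of_isUnit (M : Matrix (Fin 2) (Fin 2) R) (x y : R)
    (h : IsUnit (M 1 0 * x ^ 2 + (M 1 1 - M 0 0) * x * y - M 0 1 * y ^ 2)) :
    IsConj M !![0, -M.det; 1, M.trace] := by
  -- the columns of `P` are `v = (x, y)` and `M v`
  let P : Matrix (Fin 2) (Fin 2) R := !![x, M 0 0 * x + M 0 1 * y; y, M 1 0 * x + M 1 1 * y]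
  obtain ⟨u, hu⟩ := (isUnit_iff_isUnit_det P).mpr (by
    convert h using 1
    simp [P, det_fin_two]
    ring)
  refine IsConj.symm ⟨u, ?_⟩
  rw [SemiconjBy, hu]
  ext i j
  fin_cases i <;> fin_cases j <;> simp [P, mul_apply, det_fin_two, trace_fin_two] <;> ring

theorem isConj_companion_of_not_isScalarMod [IsLocalRing R] {ϖ : R}
    (hϖ : maximalIdeal R = Ideal.span {ϖ}) (h : ¬IsScalarMod ϖ M) :
    IsConj M !![0, -M.det; 1, M.trace] := by
  have isUnit_iff_not_dvd (x : R) : IsUnit x ↔ ¬ϖ ∣ x := by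
    rw [← Ideal.mem_span_singleton, ← hϖ, mem_maximalIdeal, mem_nonunits_iff, not_not]
  simp only [isScalarMod_fin_two_iff, ← isUnit_iff_not_dvd, not_and_or] at h
  by_cases h10 : IsUnit (M 1 0)
  · exact isConj_companion_of_isUnit M 1 0 (by simpa using h10)
  by_cases h01 : IsUnit (M 0 1)
  · exact isConj_companion_of_isUnit M 0 1 (by simpa using h01.neg)
  refine isConj_companion_of_isUnit M 1 1 ?_
  have he : IsUnit (M 1 1 - M 0 0) := by tauto
  rw [show M 1 1 - M 0 0 = (M 1 0 * 1 ^ 2 + (M 1 1 - M 0 0) * 1 * 1 - M 0 1 * 1 ^ 2) +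
    (M 0 1 + -M 1 0) by ring] at he
  rcases isUnit_or_isUnit_of_isUnit_add he with he | he
  · exact he
  rcases isUnit_or_isUnit_of_isUnit_add he with he | he
  · exact absurd he h01
  · exact absurd ((IsUnit.neg_iff _).mp he) h10

theorem isConj_of_not_isScalarMod [IsLocalRing R] {ϖ : R}
    (hϖ : maximalIdeal R = Ideal.span {ϖ}) (hM : ¬IsScalarMod ϖ M) (hN : ¬IsScalarMod ϖ N)
    (ht : M.trace = N.trace) (hd : M.det = N.det) : IsConj M N := by
  have hN := isConj_companion_of_not_isScalarMod hϖ hN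
  rw [← ht, ← hd] at hN
  exact (isConj_companion_of_not_isScalarMod hϖ hM).trans hN.symm

variable [IsDomain R]

theorem pow_dvd_sub_of_trace_eq_of_det_eq {π α β : R} (hπ : Prime π) {μ : ℕ}
    (ht : trace (α • 1 + π ^ μ • M) = trace (β • 1 + π ^ μ • N))
    (hd : det (α • 1 + π ^ μ • M) = det (β • 1 + π ^ μ • N)) : π ^ μ ∣ β - α := by
  rw [trace_smul_one_add_smul, trace_smul_one_add_smul] at ht
  rw [det_smul_one_add_smul, det_smul_one_add_smul] at hd
  -- the two characteristic polynomials agree at `β`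
  refine hπ.pow_dvd_of_pow_dvd_mul_sub μ (t := M.trace) ⟨N.det - M.det, ?_⟩
  linear_combination hd - β * ht

theorem trace_eq_and_det_eq_of_smul_one_add_smul {α q : R} (hq : q ≠ 0)
    (ht : trace (α • 1 + q • M) = trace (α • 1 + q • N))
    (hd : det (α • 1 + q • M) = det (α • 1 + q • N)) : M.trace = N.trace ∧ M.det = N.det := by
  rw [trace_smul_one_add_smul, trace_smul_one_add_smul] at ht
  rw [det_smul_one_add_smul, det_smul_one_add_smul] at hd
  have ht : M.trace = N.trace := mul_left_cancel₀ hq (by linear_combination ht)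
  refine ⟨ht, mul_left_cancel₀ (pow_ne_zero 2 hq) ?_⟩
  linear_combination hd - α * q * ht

theorem exists_eq_smul_one_of_forall_isScalarMod [WfDvdMonoid R] {ϖ : R} (hϖ : ¬IsUnit ϖ)
    (h : ∀ m : ℕ, IsScalarMod (ϖ ^ m) M) : ∃ α : R, M = α • 1 := by
  simp only [isScalarMod_fin_two_iff] at h
  have h01 := eq_zero_of_forall_pow_dvd hϖ fun m => (h m).1
  have h10 := eq_zero_of_forall_pow_dvd hϖ fun m => (h m).2.1
  have h11 := eq_zero_of_forall_pow_dvd hϖ fun m => (h m).2.2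
  refine ⟨M 0 0, ?_⟩
  ext i j
  fin_cases i <;> fin_cases j <;> simp [h01, h10, sub_eq_zero.mp h11]

theorem isConj_of_forall_isScalarMod [WfDvdMonoid R] {ϖ : R} (hϖ : ¬IsUnit ϖ)
    (hM : ∀ m : ℕ, IsScalarMod (ϖ ^ m) M) (hN : ∀ m : ℕ, IsScalarMod (ϖ ^ m) N)
    (ht : M.trace = N.trace) (hd : M.det = N.det) : IsConj M N := by
  obtain ⟨α, rfl⟩ := exists_eq_smul_one_of_forall_isScalarMod hϖ hM
  obtain ⟨β, rfl⟩ := exists_eq_smul_one_of_forall_isScalarMod hϖ hN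
  simp only [trace_smul, trace_one, det_smul, det_one, Fintype.card_fin, smul_eq_mul,
    mul_one] at ht hd
  have : (α - β) ^ 2 = 0 := by linear_combination hd - β * ht
  rw [sub_eq_zero.mp (pow_eq_zero_iff two_ne_zero |>.mp this)]

variable [IsDiscreteValuationRing R] {ϖ : R}

theorem isConj_of_isScalarMod_pow_not_succ (hϖ : Irreducible ϖ) {μ : ℕ}
    (hM : IsScalarMod (ϖ ^ μ) M) (hM₁ : ¬IsScalarMod (ϖ ^ (μ + 1)) M)
    (hN : IsScalarMod (ϖ ^ μ) N) (hN₁ : ¬IsScalarMod (ϖ ^ (μ + 1)) N)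
    (ht : M.trace = N.trace) (hd : M.det = N.det) : IsConj M N := by
  rw [pow_succ] at hM₁ hN₁
  obtain ⟨α, M', rfl, hM'⟩ := exists_eq_smul_one_add_not_isScalarMod hM hM₁
  obtain ⟨β, N', rfl, hN'⟩ := exists_eq_smul_one_add_not_isScalarMod hN hN₁
  obtain ⟨ε, hε⟩ := pow_dvd_sub_of_trace_eq_of_det_eq hϖ.prime ht hd
  have hN : β • 1 + ϖ ^ μ • N' = α • 1 + ϖ ^ μ • (ε • 1 + N') := by
    rw [sub_eq_iff_eq_add'.mp hε]
    module
  rw [hN] at ht hd ⊢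
  obtain ⟨ht, hd⟩ := trace_eq_and_det_eq_of_smul_one_add_smul (pow_ne_zero μ hϖ.ne_zero) ht hd
  refine IsConj.smul_one_add ?_ α _
  exact isConj_of_not_isScalarMod ((IsDiscreteValuationRing.irreducible_iff_uniformizer ϖ).mp hϖ)
    hM' ((isScalarMod_smul_one_add_iff ε).not.mpr hN') ht hd

theorem isConj_of_trace_eq_of_det_eq_of_isScalarMod_iff (hϖ : Irreducible ϖ)
    (ht : M.trace = N.trace) (hd : M.det = N.det)
    (h : ∀ m : ℕ, IsScalarMod (ϖ ^ m) M ↔ IsScalarMod (ϖ ^ m) N) : IsConj M N := by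
  by_cases hM : ∀ m : ℕ, IsScalarMod (ϖ ^ m) M
  · exact isConj_of_forall_isScalarMod hϖ.not_isUnit hM (fun m => (h m).mp (hM m)) ht hd
  obtain ⟨μ, hμ, hμ'⟩ := exists_isScalarMod_pow_not_succ hM
  exact isConj_of_isScalarMod_pow_not_succ hϖ hμ hμ' ((h μ).mp hμ) (mt (h (μ + 1)).mpr hμ') ht hd

end FinTwo

end Matrix

/-- Two matrices `A, B ∈ GL₂(ℤ_p)` are conjugate iff they have the same characteristic
polynomial and `μ(A) = μ(B)`, where `μ(A)` is the largest `μ ∈ ℤ≥0 ∪ {∞}` such that `A` is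
congruent to a scalar matrix modulo `p^μ`.  Having `μ(A) = μ(B)` is expressed by saying that
`A` is scalar mod `p^m` exactly when `B` is, for every `m`. -/
theorem stmt_4 (p : ℕ) [Fact p.Prime] (A B : GL (Fin 2) ℤ_[p]) :
    IsConj A B ↔
      ((A : Matrix (Fin 2) (Fin 2) ℤ_[p]).charpoly =
          (B : Matrix (Fin 2) (Fin 2) ℤ_[p]).charpoly ∧
        ∀ m : ℕ,
          (∃ α : ℤ_[p], ∀ i j, (p : ℤ_[p]) ^ m ∣
              ((A : Matrix (Fin 2) (Fin 2) ℤ_[p]) i j -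
                (α • (1 : Matrix (Fin 2) (Fin 2) ℤ_[p])) i j)) ↔
          (∃ α : ℤ_[p], ∀ i j, (p : ℤ_[p]) ^ m ∣
              ((B : Matrix (Fin 2) (Fin 2) ℤ_[p]) i j -
                (α • (1 : Matrix (Fin 2) (Fin 2) ℤ_[p])) i j))) := by
  rw [← Units.isConj_coe_iff]
  constructor
  · intro h
    exact ⟨Matrix.charpoly_eq_of_isConj h,
      fun m => ⟨(Matrix.IsScalarMod.of_isConj · h), (Matrix.IsScalarMod.of_isConj · h.symm)⟩⟩
  · rintro ⟨hχ, hμ⟩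
    have ht :
        (A : Matrix (Fin 2) (Fin 2) ℤ_[p]).trace = (B : Matrix (Fin 2) (Fin 2) ℤ_[p]).trace := by
      rw [Matrix.trace_eq_neg_charpoly_coeff, hχ, ← Matrix.trace_eq_neg_charpoly_coeff]
    have hd : (A : Matrix (Fin 2) (Fin 2) ℤ_[p]).det = (B : Matrix (Fin 2) (Fin 2) ℤ_[p]).det := by
      rw [Matrix.det_eq_sign_charpoly_coeff, hχ, ← Matrix.det_eq_sign_charpoly_coeff]
    exact Matrix.isConj_of_trace_eq_of_det_eq_of_isScalarMod_iff PadicInt.irreducible_p ht hd hμ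
end

section
/- Let p be an odd prime, n ≥ 1, μ with 1 ≤ μ < n, α ∈ (ℤ/p^n)^× and β ∈ (ℤ/p^{n-μ})^× a square. Then the centralizer in GL₂(ℤ/p^n) of the matrix with rows (α, βp^μ) and (p^μ, α) has order (p-1)²p^{2n-2+2μ}, and hence its conjugacy class has size (p+1)p^{2(n-μ)-1}. -/
/-!
A matrix `X = !![a, b; c, d]` commutes with `g` iff `p^μ (d - a) = 0` and `p^μ (b - β c) = 0`, so
the commutant of `g` is parametrised by `(a, c)` together with `s = d - a` and `t = b - β c` in the
annihilator of `p^μ`, which has `p^μ` elements. As `μ < n`, such `s` and `t` vanish mod `p`, hence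
`det X ≡ a² - β c² ≡ (a - δ c)(a + δ c) (mod p)` where `β ≡ δ²`. Invertibility is detected mod `p`,
so the units of the commutant are `(p - 1)²` residue pairs `(a, c)`, each lifted in `p^{2(n-1)}`
ways, times `p^{2μ}` choices of `(s, t)`. The class size is `|GL₂(ℤ/p^n)| / |C(g)|` by
orbit–stabilizer, and `|GL₂(ℤ/p^n)| = p^{4(n-1)} |GL₂(𝔽_p)|` because reduction mod `p` is a
surjective additive map, all of whose fibres have the same size, that detects invertibility.
-/

theorem AddMonoidHom.card_subtype_comp_eq_mul_card_ker {A B : Type*} [AddGroup A] [AddGroup B]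
    (f : A →+ B) (hf : Function.Surjective f) (P : B → Prop) :
    Nat.card {a // P (f a)} = Nat.card {b // P b} * Nat.card f.ker := by
  let s := Function.surjInv hf
  have hs : ∀ b, f (s b) = b := Function.surjInv_eq hf
  refine (Nat.card_congr ?_).trans (Nat.card_prod _ _)
  exact
    { toFun a := (⟨f a, a.2⟩, ⟨-s (f a) + a, by simp [hs]⟩)
      invFun x := ⟨s x.1 + x.2, by simpa [hs, f.mem_ker.mp x.2.2] using x.1.2⟩
      left_inv a := by simp
      right_inv x := by ext <;> simp [hs, f.mem_ker.mp x.2.2] }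

theorem AddMonoidHom.card_subtype_comp_mul_card {A B : Type*} [AddGroup A] [AddGroup B]
    (f : A →+ B) (hf : Function.Surjective f) (P : B → Prop) :
    Nat.card {a // P (f a)} * Nat.card B = Nat.card A * Nat.card {b // P b} := by
  have hA := f.card_subtype_comp_eq_mul_card_ker hf (fun _ => True)
  simp only [Nat.card_congr (Equiv.subtypeUnivEquiv fun _ => trivial)] at hA
  rw [f.card_subtype_comp_eq_mul_card_ker hf, hA]
  ring

theorem Nat.card_units_eq_card_isUnit (M : Type*) [Monoid M] :
    Nat.card Mˣ = Nat.card {x : M // IsUnit x} :=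
  Nat.card_congr Submonoid.unitsTypeEquivIsUnitSubmonoid.toEquiv

theorem Matrix.nat_card_GL {n R : Type*} [Fintype n] [DecidableEq n] [CommRing R] :
    Nat.card (GL n R) = Nat.card {X : Matrix n n R // IsUnit X.det} := by
  rw [Nat.card_units_eq_card_isUnit]
  exact Nat.card_congr (Equiv.subtypeEquivRight fun X => X.isUnit_iff_isUnit_det)

noncomputable def Units.centralizerSingletonEquiv {M : Type*} [Monoid M] (g : Mˣ) :
    Subgroup.centralizer {g} ≃ {x : M // Commute x g ∧ IsUnit x} where
  toFun x := ⟨x.1, Commute.units_val_iff.mpr (Subgroup.mem_centralizer_singleton_iff.mp x.2),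
    x.1.isUnit⟩
  invFun x := ⟨x.2.2.unit, Subgroup.mem_centralizer_singleton_iff.mpr
    (Commute.units_val_iff.mp (x.2.1 : Commute (x.2.2.unit : M) g))⟩
  left_inv x := by ext; rfl
  right_inv x := rfl

theorem nat_card_isConj_mul_card_centralizer {G : Type*} [Group G] (g : G) :
    Nat.card {h // IsConj g h} * Nat.card (Subgroup.centralizer {g}) = Nat.card G := by
  have horbit : {h // IsConj g h} ≃ MulAction.orbit (ConjAct G) g :=
    Equiv.subtypeEquivRight fun h => by rw [ConjAct.mem_orbit_conjAct, isConj_comm]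
  rw [Subgroup.nat_card_centralizer_nat_card_stabilizer, Nat.card_congr horbit,
    Nat.card_coe_set_eq, ← MulAction.index_stabilizer, Subgroup.index_mul_card]
  rfl

theorem card_isUnit_sq_sub_sq_mul_sq {F : Type*} [Field F] (hF : ringChar F ≠ 2) {δ : F}
    (hδ : δ ≠ 0) :
    Nat.card {w : F × F // IsUnit (w.1 ^ 2 - δ ^ 2 * w.2 ^ 2)} = Nat.card Fˣ ^ 2 := by
  have h2 : (2 : F) ≠ 0 := Ring.two_ne_zero hF
  let e : F × F ≃ F × F :=
    { toFun w := (w.1 - δ * w.2, w.1 + δ * w.2)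
      invFun u := ((u.1 + u.2) / 2, (u.2 - u.1) / (2 * δ))
      left_inv w := by ext <;> field_simp <;> ring
      right_inv u := by ext <;> field_simp <;> ring }
  have he : ∀ w : F × F, IsUnit (w.1 ^ 2 - δ ^ 2 * w.2 ^ 2) ↔ IsUnit (e w).1 ∧ IsUnit (e w).2 :=
    fun w => by
      rw [← IsUnit.mul_iff, show (e w).1 * (e w).2 = w.1 ^ 2 - δ ^ 2 * w.2 ^ 2 by
        simp only [e, Equiv.coe_fn_mk]; ring]
  rw [Nat.card_congr ((e.subtypeEquiv he).trans Equiv.subtypeProdEquivProd), Nat.card_prod,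
    Nat.card_units_eq_card_isUnit, sq]

namespace Matrix
variable {R : Type*} [CommRing R]

theorem commute_fin_two_of_iff (α β P a b c d : R) :
    Commute !![a, b; c, d] !![α, β * P; P, α] ↔ P * (d - a) = 0 ∧ P * (b - β * c) = 0 := by
  rw [Commute, SemiconjBy, mul_fin_two, mul_fin_two]
  simp only [of.injective.eq_iff, vecCons_inj, and_true]
  constructor
  · rintro ⟨⟨h00, -⟩, h10, -⟩
    exact ⟨by linear_combination h10, by linear_combination h00⟩
  · rintro ⟨h1, h2⟩
    refine ⟨⟨?_, ?_⟩, ?_, ?_⟩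
    · linear_combination h2
    · linear_combination (-β) * h1
    · linear_combination h1
    · linear_combination -h2

def commuteFinTwoOfEquiv (α β P : R) :
    {X : Matrix (Fin 2) (Fin 2) R // Commute X !![α, β * P; P, α]} ≃
      (R × R) × {s : R // P * s = 0} × {t : R // P * t = 0} where
  toFun X :=
    have h := (commute_fin_two_of_iff α β P _ _ _ _).mp (X.1.eta_fin_two ▸ X.2)
    ((X.1 0 0, X.1 1 0), ⟨_, h.1⟩, ⟨_, h.2⟩)
  invFun q := ⟨!![q.1.1, β * q.1.2 + q.2.2.1; q.1.2, q.1.1 + q.2.1.1],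
    (commute_fin_two_of_iff α β P _ _ _ _).mpr
      ⟨by simpa using q.2.1.2, by simpa using q.2.2.2⟩⟩
  left_inv X := by
    ext i j
    fin_cases i <;> fin_cases j <;> simp
  right_inv q := by ext <;> simp

end Matrix

namespace ZMod

theorem card_subtype_castHom_mul {m n : ℕ} (h : m ∣ n) (P : ZMod m → Prop) :
    Nat.card {x : ZMod n // P (castHom h (ZMod m) x)} * m = n * Nat.card {y // P y} := by
  have h := (castHom h (ZMod m)).toAddMonoidHom.card_subtype_comp_mul_card
    (castHom_surjective h) P
  rwa [Nat.card_zmod, Nat.card_zmod] at h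

variable {p : ℕ} [Fact p.Prime]

theorem isUnit_iff_isUnit_castHom_prime {n : ℕ} (hn : n ≠ 0) (x : ZMod (p ^ n)) :
    IsUnit x ↔ IsUnit (castHom (dvd_pow_self p hn) (ZMod p) x) := by
  rw [← natCast_zmod_val x, map_natCast, isUnit_iff_coprime, isUnit_iff_coprime,
    Nat.coprime_pow_right_iff (Nat.pos_of_ne_zero hn)]

theorem prime_pow_mul_eq_zero_iff {n μ : ℕ} (hμ : μ ≤ n) (x : ZMod (p ^ n)) :
    (p : ZMod (p ^ n)) ^ μ * x = 0 ↔
      castHom (pow_dvd_pow p (Nat.sub_le n μ)) (ZMod (p ^ (n - μ))) x = 0 := by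
  have hp : 0 < p := (Fact.out : p.Prime).pos
  rw [← natCast_zmod_val x, map_natCast, ← Nat.cast_pow, ← Nat.cast_mul, natCast_eq_zero_iff,
    natCast_eq_zero_iff]
  generalize x.val = v
  rw [← Nat.pow_sub_mul_pow p hμ, mul_comm, Nat.mul_dvd_mul_iff_left (pow_pos hp μ)]

theorem card_prime_pow_mul_eq_zero {n μ : ℕ} (hμ : μ ≤ n) :
    Nat.card {x : ZMod (p ^ n) // (p : ZMod (p ^ n)) ^ μ * x = 0} = p ^ μ := by
  have h := card_subtype_castHom_mul (pow_dvd_pow p (Nat.sub_le n μ)) (· = 0)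
  rw [show Nat.card {y : ZMod (p ^ (n - μ)) // y = 0} = 1 from Nat.card_unique, mul_one] at h
  simp_rw [prime_pow_mul_eq_zero_iff hμ]
  exact Nat.eq_of_mul_eq_mul_right (pow_pos (Fact.out : p.Prime).pos _)
    (h.trans (pow_mul_pow_sub p hμ).symm)

theorem isUnit_add_iff_of_prime_pow_mul_eq_zero {n μ : ℕ} (hμ : μ < n) {x s : ZMod (p ^ n)}
    (hs : (p : ZMod (p ^ n)) ^ μ * s = 0) : IsUnit (x + s) ↔ IsUnit x := by
  have hn : n ≠ 0 := Nat.ne_zero_of_lt hμ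
  have hs' : castHom (dvd_pow_self p hn) (ZMod p) s = 0 := by
    rw [← castHom_comp (dvd_pow_self p (Nat.sub_ne_zero_of_lt hμ))
        (pow_dvd_pow p (Nat.sub_le n μ)), RingHom.comp_apply,
      (prime_pow_mul_eq_zero_iff hμ.le s).mp hs, map_zero]
  rw [isUnit_iff_isUnit_castHom_prime hn, isUnit_iff_isUnit_castHom_prime hn x, map_add, hs',
    add_zero]

theorem card_GL_prime_pow (m : ℕ) {n : ℕ} (hn : n ≠ 0) :
    Nat.card (GL (Fin m) (ZMod (p ^ n))) =
      p ^ ((n - 1) * m ^ 2) * ∏ i : Fin m, (p ^ m - p ^ (i : ℕ)) := by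
  set π := castHom (dvd_pow_self p hn) (ZMod p)
  have hπ : Function.Surjective π := castHom_surjective _
  have hsurj :
      Function.Surjective (π.toAddMonoidHom.mapMatrix : Matrix (Fin m) (Fin m) _ →+ _) :=
    fun Y => ⟨Y.map (Function.surjInv hπ), by ext; exact Function.surjInv_eq hπ _⟩
  have hdet : ∀ X : Matrix (Fin m) (Fin m) (ZMod (p ^ n)),
      IsUnit (π.toAddMonoidHom.mapMatrix X).det ↔ IsUnit X.det := fun X => by
    rw [isUnit_iff_isUnit_castHom_prime hn, RingHom.map_det]; rfl
  have hcard : ∀ k, Nat.card (Matrix (Fin m) (Fin m) (ZMod k)) = k ^ (m ^ 2) := fun k => by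
    rw [Matrix, Nat.card_fun, Nat.card_fun, Nat.card_zmod, Nat.card_fin, ← pow_mul, sq]
  have h := π.toAddMonoidHom.mapMatrix.card_subtype_comp_mul_card hsurj
    (fun Y : Matrix (Fin m) (Fin m) (ZMod p) => IsUnit Y.det)
  rw [Nat.card_congr (Equiv.subtypeEquivRight hdet), ← Matrix.nat_card_GL, hcard, hcard,
    ← Matrix.nat_card_GL, Matrix.card_GL_field, ZMod.card, ← pow_mul,
    show n * m ^ 2 = (n - 1) * m ^ 2 + m ^ 2 by
      nth_rw 1 [← Nat.sub_add_cancel (Nat.one_le_iff_ne_zero.mpr hn)]; ring,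
    pow_add, mul_right_comm] at h
  exact Nat.eq_of_mul_eq_mul_right (pow_pos (Fact.out : p.Prime).pos _) h

theorem card_GL_two_prime_pow {n : ℕ} (hn : n ≠ 0) :
    Nat.card (GL (Fin 2) (ZMod (p ^ n))) = (p - 1) ^ 2 * (p + 1) * p ^ (4 * n - 3) := by
  obtain ⟨m, rfl⟩ : ∃ m, n = m + 1 := ⟨n - 1, by omega⟩
  obtain ⟨q, rfl⟩ : ∃ q, p = q + 1 := ⟨p - 1, (Nat.sub_add_cancel (Fact.out : p.Prime).pos).symm⟩
  have hsq : (q + 1) ^ 2 = q * (q + 2) + 1 := by ring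
  rw [card_GL_prime_pow 2 hn, Fin.prod_univ_two, Fin.val_zero, Fin.val_one, pow_zero, pow_one,
    show 4 * (m + 1) - 3 = 4 * m + 1 by omega, Nat.add_sub_cancel, Nat.add_sub_cancel, hsq,
    Nat.add_sub_cancel, show q * (q + 2) + 1 - (q + 1) = q * (q + 1) by
      rw [Nat.sub_eq_iff_eq_add (by nlinarith)]; ring]
  ring

theorem card_isUnit_sq_sub_mul_sq (hp : p ≠ 2) {n : ℕ} (hn : n ≠ 0) {β : ZMod (p ^ n)}
    {δ : ZMod p} (hδ : δ ≠ 0) (hβ : castHom (dvd_pow_self p hn) (ZMod p) β = δ ^ 2) :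
    Nat.card {v : ZMod (p ^ n) × ZMod (p ^ n) // IsUnit (v.1 ^ 2 - β * v.2 ^ 2)} =
      (p ^ (n - 1) * (p - 1)) ^ 2 := by
  set π := castHom (dvd_pow_self p hn) (ZMod p)
  have hπ : Function.Surjective π := castHom_surjective _
  have h := (π.toAddMonoidHom.prodMap π.toAddMonoidHom).card_subtype_comp_mul_card
    (hπ.prodMap hπ) (fun w => IsUnit (w.1 ^ 2 - δ ^ 2 * w.2 ^ 2))
  have hunit : ∀ v : ZMod (p ^ n) × ZMod (p ^ n), IsUnit ((π v.1) ^ 2 - δ ^ 2 * (π v.2) ^ 2) ↔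
      IsUnit (v.1 ^ 2 - β * v.2 ^ 2) := fun v => by
    rw [isUnit_iff_isUnit_castHom_prime hn, ← hβ, map_sub, map_mul, map_pow, map_pow]
  have hunitsp : Nat.card (ZMod p)ˣ = p - 1 := by
    rw [Nat.card_eq_fintype_card, ZMod.card_units]
  simp only [AddMonoidHom.coe_prodMap, Prod.map_fst, Prod.map_snd, RingHom.toAddMonoidHom_eq_coe,
    AddMonoidHom.coe_coe] at h
  rw [Nat.card_congr (Equiv.subtypeEquivRight hunit),
    card_isUnit_sq_sub_sq_mul_sq ((ringChar_zmod_n p).substr hp) hδ, hunitsp,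
    Nat.card_prod, Nat.card_prod, Nat.card_zmod, Nat.card_zmod] at h
  obtain ⟨m, rfl⟩ : ∃ m, n = m + 1 := ⟨n - 1, by omega⟩
  have hp0 : 0 < p := (Fact.out : p.Prime).pos
  refine Nat.eq_of_mul_eq_mul_right (Nat.mul_pos hp0 hp0) (h.trans ?_)
  rw [Nat.add_sub_cancel]
  ring

theorem card_commute_fin_two_of_isUnit_det {n μ : ℕ} (hμ : μ < n) (α β : ZMod (p ^ n)) :
    Nat.card {X : Matrix (Fin 2) (Fin 2) (ZMod (p ^ n)) //
        Commute X !![α, β * (p : ZMod (p ^ n)) ^ μ; (p : ZMod (p ^ n)) ^ μ, α] ∧ IsUnit X.det} =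
      Nat.card {v : ZMod (p ^ n) × ZMod (p ^ n) // IsUnit (v.1 ^ 2 - β * v.2 ^ 2)} *
        (p ^ μ * p ^ μ) := by
  set e := Matrix.commuteFinTwoOfEquiv α β ((p : ZMod (p ^ n)) ^ μ)
  have hdet : ∀ X, IsUnit X.1.det ↔ IsUnit ((e X).1.1 ^ 2 - β * (e X).1.2 ^ 2) := fun X => by
    obtain ⟨⟨⟨a, c⟩, ⟨s, hs⟩, ⟨t, ht⟩⟩, rfl⟩ := e.symm.surjective X
    rw [e.apply_symm_apply]
    have hst : (p : ZMod (p ^ n)) ^ μ * (a * s - t * c) = 0 := by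
      linear_combination a * hs - c * ht
    simp only [e, Matrix.commuteFinTwoOfEquiv, Equiv.coe_fn_symm_mk, Matrix.det_fin_two_of]
    rw [show a * (a + s) - (β * c + t) * c = a ^ 2 - β * c ^ 2 + (a * s - t * c) by ring,
      isUnit_add_iff_of_prime_pow_mul_eq_zero hμ hst]
  rw [← Nat.card_congr (Equiv.subtypeSubtypeEquivSubtypeInter _ _),
    Nat.card_congr (e.subtypeEquiv (q := fun w => IsUnit (w.1.1 ^ 2 - β * w.1.2 ^ 2)) hdet),
    Nat.card_congr (Equiv.prodSubtypeFstEquivSubtypeProd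
      (p := fun v : ZMod (p ^ n) × ZMod (p ^ n) => IsUnit (v.1 ^ 2 - β * v.2 ^ 2))),
    Nat.card_prod, Nat.card_prod, card_prime_pow_mul_eq_zero hμ.le]

theorem card_centralizer_fin_two_of (hp : p ≠ 2) {n μ : ℕ} (hμ : μ < n) (α β : ZMod (p ^ n))
    {δ : ZMod p} (hδ : δ ≠ 0)
    (hβ : castHom (dvd_pow_self p (Nat.ne_zero_of_lt hμ)) (ZMod p) β = δ ^ 2)
    (g : GL (Fin 2) (ZMod (p ^ n)))
    (hg : (g : Matrix (Fin 2) (Fin 2) (ZMod (p ^ n))) =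
        !![α, β * (p : ZMod (p ^ n)) ^ μ; (p : ZMod (p ^ n)) ^ μ, α]) :
    Nat.card (Subgroup.centralizer {g}) = (p - 1) ^ 2 * p ^ (2 * n - 2 + 2 * μ) := by
  rw [Nat.card_congr ((Units.centralizerSingletonEquiv g).trans
      (Equiv.subtypeEquivRight fun X => and_congr_right' X.isUnit_iff_isUnit_det)),
    hg, card_commute_fin_two_of_isUnit_det hμ,
    card_isUnit_sq_sub_mul_sq hp (Nat.ne_zero_of_lt hμ) hδ hβ]
  obtain ⟨m, rfl⟩ : ∃ m, n = m + 1 := ⟨n - 1, by omega⟩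
  rw [show 2 * (m + 1) - 2 + 2 * μ = m + m + (μ + μ) by omega, Nat.add_sub_cancel]
  ring

end ZMod

theorem stmt_7_general (p n μ : ℕ) [Fact p.Prime] (hp : p ≠ 2) (hμn : μ < n) (α β : ZMod (p ^ n))
    (hβsq : ∃ γ : ZMod (p ^ (n - μ)), IsUnit γ ∧
        ZMod.castHom (pow_dvd_pow p (Nat.sub_le n μ)) (ZMod (p ^ (n - μ))) β = γ ^ 2)
    (g : GL (Fin 2) (ZMod (p ^ n)))
    (hg : (g : Matrix (Fin 2) (Fin 2) (ZMod (p ^ n))) =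
        !![α, β * (p : ZMod (p ^ n)) ^ μ; (p : ZMod (p ^ n)) ^ μ, α]) :
    Nat.card (Subgroup.centralizer {g}) = (p - 1) ^ 2 * p ^ (2 * n - 2 + 2 * μ) ∧
    Nat.card {h : GL (Fin 2) (ZMod (p ^ n)) // IsConj g h} =
      (p + 1) * p ^ (2 * (n - μ) - 1) := by
  obtain ⟨γ, hγ, hβγ⟩ := hβsq
  have hnμ : n - μ ≠ 0 := Nat.sub_ne_zero_of_lt hμn
  set δ := ZMod.castHom (dvd_pow_self p hnμ) (ZMod p) γ
  have hδ : δ ≠ 0 := (hγ.map _).ne_zero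
  have hβδ : ZMod.castHom (dvd_pow_self p (Nat.ne_zero_of_lt hμn)) (ZMod p) β = δ ^ 2 := by
    rw [← ZMod.castHom_comp (dvd_pow_self p hnμ) (pow_dvd_pow p (Nat.sub_le n μ)),
      RingHom.comp_apply, hβγ, map_pow]
  have hcent := ZMod.card_centralizer_fin_two_of hp hμn α β hδ hβδ g hg
  refine ⟨hcent, ?_⟩
  have hclass := nat_card_isConj_mul_card_centralizer g
  rw [hcent, ZMod.card_GL_two_prime_pow (Nat.ne_zero_of_lt hμn),
    show 4 * n - 3 = (2 * n - 2 + 2 * μ) + (2 * (n - μ) - 1) by omega, pow_add] at hclass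
  have hp1 : 0 < p - 1 := Nat.sub_pos_of_lt (Fact.out : p.Prime).one_lt
  have hp0 : 0 < p := (Fact.out : p.Prime).pos
  exact Nat.eq_of_mul_eq_mul_right (by positivity) (hclass.trans (by ring))

/-- For an odd prime `p`, `1 ≤ μ < n`, `α ∈ (ℤ/p^n)^×` and `β` a unit whose image in
`ℤ/p^{n-μ}` is the square of a unit, the centralizer in `GL₂(ℤ/p^n)` of
`!![α, βp^μ; p^μ, α]` has order `(p-1)²p^{2n-2+2μ}`, and hence its conjugacy class has
size `(p+1)p^{2(n-μ)-1}`. -/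
theorem stmt_7 (p n μ : ℕ) [Fact p.Prime] (hp : p ≠ 2) (hn : 1 ≤ n) (hμ1 : 1 ≤ μ)
    (hμn : μ < n) (α β : ZMod (p ^ n)) (hα : IsUnit α)
    (hβu : IsUnit (ZMod.castHom (pow_dvd_pow p (Nat.sub_le n μ)) (ZMod (p ^ (n - μ))) β))
    (hβsq : ∃ γ : ZMod (p ^ (n - μ)), IsUnit γ ∧
        ZMod.castHom (pow_dvd_pow p (Nat.sub_le n μ)) (ZMod (p ^ (n - μ))) β = γ ^ 2)
    (g : GL (Fin 2) (ZMod (p ^ n)))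
    (hg : (g : Matrix (Fin 2) (Fin 2) (ZMod (p ^ n))) =
        !![α, β * (p : ZMod (p ^ n)) ^ μ; (p : ZMod (p ^ n)) ^ μ, α]) :
    Nat.card (Subgroup.centralizer {g}) = (p - 1) ^ 2 * p ^ (2 * n - 2 + 2 * μ) ∧
    Nat.card {h : GL (Fin 2) (ZMod (p ^ n)) // IsConj g h} =
      (p + 1) * p ^ (2 * (n - μ) - 1) :=
  stmt_7_general p n μ hp hμn α β hβsq g hg
end

section
/- Let p be prime and suppose arithmetic functions ℓ⁰, ℓ¹ : ℕ → ℕ satisfy, for some k₀ coprime to p and integers 0 ≤ a ≤ n: ℓ⁰_k = e_{k₀}(k)·2·min{v(k)+a, n} and ℓ¹_k = e_{k₀}(k)·2·min{v(k)+a, n-1}, where e_{k₀}(k) = 1 if k₀ | k and 0 otherwise. Define λ_k = Σ_{d|k} μ(d)(p^{ℓ⁰_{k/d}} - p^{ℓ¹_{k/d}}). Then λ_k = p^{2n} - p^{2n-2} if k = k₀p^{n-a}, and λ_k = 0 otherwise. -/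
/-!
The difference `p ^ ℓ⁰_j - p ^ ℓ¹_j` vanishes unless `k₀ ∣ j` and `v(j) + a ≥ n`, in which case
it is the constant `p ^ (2n) - p ^ (2n-2)`. Since `k₀` is coprime to `p`, these `j` are exactly the
multiples of `k₀ p ^ (n-a)`, so the difference is the divisor sum of `p ^ (2n) - p ^ (2n-2)` times
the indicator of `k₀ p ^ (n-a)`, and Möbius inversion recovers that indicator.
-/

open ArithmeticFunction
open scoped ArithmeticFunction.Moebius

theorem Nat.Coprime.mul_pow_dvd_iff {p k₀ j : ℕ} [Fact p.Prime] (hk₀ : k₀.Coprime p)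
    (e : ℕ) (hj : j ≠ 0) : k₀ * p ^ e ∣ j ↔ k₀ ∣ j ∧ e ≤ padicValNat p j := by
  rw [← padicValNat_dvd_iff_le hj]
  exact ⟨fun h => ⟨dvd_of_mul_right_dvd h, dvd_of_mul_left_dvd h⟩,
    fun ⟨h₁, h₂⟩ => (hk₀.pow_right e).mul_dvd_of_dvd_of_dvd h₁ h₂⟩

theorem pow_two_mul_min_sub_pow_two_mul_min {R : Type*} [Ring R] (x : R) (t n : ℕ) :
    x ^ (2 * min t n) - x ^ (2 * min t (n - 1)) =
      if n ≤ t then x ^ (2 * n) - x ^ (2 * n - 2) else 0 := by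
  split_ifs with h
  · rw [min_eq_right h, min_eq_right (by omega), Nat.mul_sub_one]
  · rw [min_eq_left (by omega), min_eq_left (by omega), sub_self]

/-- `j ↦ c · [m ∣ j]` is the divisor sum of `j ↦ c · [j = m]`. -/
theorem sum_divisors_moebius_mul_ite_dvd {R : Type*} [Ring R] {F : ℕ → R} {m : ℕ} {c : R}
    (hF : ∀ j > 0, F j = if m ∣ j then c else 0) {k : ℕ} (hk : 0 < k) :
    ∑ d ∈ k.divisors, (μ d : R) * F (k / d) = if k = m then c else 0 := by
  have hsum : ∀ j > 0, ∑ i ∈ j.divisors, (if i = m then c else 0) = F j := by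
    intro j hj
    simp only [Finset.sum_ite_eq', Nat.mem_divisors, ne_eq, hj.ne', not_false_eq_true, and_true,
      hF j hj]
  rw [← Nat.sum_divisorsAntidiagonal (fun d e => (μ d : R) * F e)]
  exact sum_eq_iff_sum_mul_moebius_eq.mp hsum k hk

theorem stmt_10_general (p : ℕ) (hp : p.Prime) (k₀ n a : ℕ) (hk₀ : Nat.Coprime k₀ p)
    (ℓ0 ℓ1 : ℕ → ℕ)
    (hℓ0 : ∀ k, ℓ0 k = if k₀ ∣ k then 2 * min (padicValNat p k + a) n else 0)
    (hℓ1 : ∀ k, ℓ1 k = if k₀ ∣ k then 2 * min (padicValNat p k + a) (n - 1) else 0)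
    (lam : ℕ → ℤ)
    (hlam : ∀ k, lam k = ∑ d ∈ k.divisors,
        (ArithmeticFunction.moebius d : ℤ) *
          ((p : ℤ) ^ ℓ0 (k / d) - (p : ℤ) ^ ℓ1 (k / d))) :
    ∀ k : ℕ, 1 ≤ k →
      lam k = if k = k₀ * p ^ (n - a) then (p : ℤ) ^ (2 * n) - (p : ℤ) ^ (2 * n - 2)
        else 0 := by
  have : Fact p.Prime := ⟨hp⟩
  intro k hk
  rw [hlam k]
  refine sum_divisors_moebius_mul_ite_dvd (F := fun j => (p : ℤ) ^ ℓ0 j - (p : ℤ) ^ ℓ1 j)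
    (fun j hj => ?_) hk
  simp only [hℓ0, hℓ1, hk₀.mul_pow_dvd_iff _ hj.ne']
  by_cases hk₀j : k₀ ∣ j
  · simp only [hk₀j, if_true, true_and, pow_two_mul_min_sub_pow_two_mul_min, Nat.sub_le_iff_le_add]
  · simp only [hk₀j, if_false, false_and, sub_self]

/-- Möbius-inversion computation of `λ_k` in the case `a = b`: with
`ℓ⁰_k = e_{k₀}(k)·2·min(v(k)+a, n)`, `ℓ¹_k = e_{k₀}(k)·2·min(v(k)+a, n-1)` and
`λ_k = Σ_{d∣k} μ(d)(p^{ℓ⁰_{k/d}} - p^{ℓ¹_{k/d}})`, one has `λ_k = p^{2n} - p^{2n-2}`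
for `k = k₀p^{n-a}` and `λ_k = 0` otherwise. -/
theorem stmt_10 (p : ℕ) (hp : p.Prime) (k₀ n a : ℕ) (hk₀ : Nat.Coprime k₀ p)
    (hk₀pos : 0 < k₀) (hn : 1 ≤ n) (ha : a ≤ n)
    (ℓ0 ℓ1 : ℕ → ℕ)
    (hℓ0 : ∀ k, ℓ0 k = if k₀ ∣ k then 2 * min (padicValNat p k + a) n else 0)
    (hℓ1 : ∀ k, ℓ1 k = if k₀ ∣ k then 2 * min (padicValNat p k + a) (n - 1) else 0)
    (lam : ℕ → ℤ)
    (hlam : ∀ k, lam k = ∑ d ∈ k.divisors,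
        (ArithmeticFunction.moebius d : ℤ) *
          ((p : ℤ) ^ ℓ0 (k / d) - (p : ℤ) ^ ℓ1 (k / d))) :
    ∀ k : ℕ, 1 ≤ k →
      lam k = if k = k₀ * p ^ (n - a) then (p : ℤ) ^ (2 * n) - (p : ℤ) ^ (2 * n - 2)
        else 0 :=
  stmt_10_general p hp k₀ n a hk₀ ℓ0 ℓ1 hℓ0 hℓ1 lam hlam
end

section
/- Let p be prime, k₀ coprime to p, and 0 ≤ a < b ≤ n. Define λ̃_k = p^{ℓ⁰_k} - p^{ℓ¹_k} where ℓ⁰_k = e_{k₀}(k)(min{v(k)+a,n} + min{v(k)+b,n}) and ℓ¹_k = e_{k₀}(k)(min{v(k)+a,n-1} + min{v(k)+b,n-1}). Let λ_k = Σ_{d|k} μ(d)λ̃_{k/d}. Then λ_k = (p-1)p^{2n+a-b-1} if k = k₀p^{n-b}; λ_k = (p-1)²p^{n+u+a-2} if k = k₀p^u with n-b < u < n-a; λ_k = (p-1)p^{2n-1} if k = k₀p^{n-a}; and λ_k = 0 for all other k. -/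
/-!
For `k₀ ∣ k` the value `λ̃_k` depends only on `v(k)`, say `λ̃_k = g(v(k))`, and
`λ̃_k = 0` otherwise. The divisors of `k` of the form `k₀pᵘ` are exactly those with
`u ≤ v(k)`, so the function equal to `g(u) - g(u - 1)` at `k₀pᵘ` and to `0` elsewhere has
telescoping divisor sums `λ̃_k`; by Möbius inversion it is `λ`. Finally `g` vanishes for
`v < n - b`, equals `(p - 1)p^{n+v+a-1}` for `n - b ≤ v < n - a`, and is constant from
`v = n - a` on, so its successive differences are the four claimed values.
-/

open Finset ArithmeticFunction

def backwardDiff (g : ℕ → ℤ) : ℕ → ℤ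
  | 0 => g 0
  | u + 1 => g (u + 1) - g u

theorem sum_range_backwardDiff (g : ℕ → ℤ) (v : ℕ) :
    ∑ u ∈ range (v + 1), backwardDiff g u = g v := by
  induction v with
  | zero => simp [backwardDiff]
  | succ v ih => rw [sum_range_succ, ih, backwardDiff]; ring

theorem backwardDiff_eq_self {g : ℕ → ℤ} {u : ℕ} (h : ∀ w < u, g w = 0) :
    backwardDiff g u = g u := by
  cases u with
  | zero => rfl
  | succ u => rw [backwardDiff, h u u.lt_succ_self, sub_zero]

section Divisors

variable {p k₀ : ℕ} [Fact p.Prime]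

theorem padicValNat_mul_pow_of_coprime (hk₀ : k₀.Coprime p) (hk₀pos : 0 < k₀) (u : ℕ) :
    padicValNat p (k₀ * p ^ u) = u := by
  have hp : p.Prime := Fact.out
  rw [padicValNat.mul hk₀pos.ne' (pow_ne_zero u hp.ne_zero), padicValNat.prime_pow,
    padicValNat.eq_zero_of_not_dvd ((Nat.Prime.coprime_iff_not_dvd hp).1 hk₀.symm), zero_add]

open Classical in
theorem sum_divisors_ite_exists_eq_mul_pow (hk₀ : k₀.Coprime p) (hk₀pos : 0 < k₀)
    (f : ℕ → ℤ) {k : ℕ} (hk : k ≠ 0) :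
    ∑ d ∈ k.divisors, (if ∃ u, d = k₀ * p ^ u then f (padicValNat p d) else 0) =
      if k₀ ∣ k then ∑ u ∈ range (padicValNat p k + 1), f u else 0 := by
  rw [← sum_filter]
  split_ifs with hdvd
  · have hfilter : k.divisors.filter (fun d => ∃ u, d = k₀ * p ^ u) =
        (range (padicValNat p k + 1)).image (k₀ * p ^ ·) := by
      ext d
      simp only [mem_filter, Nat.mem_divisors, mem_image, mem_range, Nat.lt_succ_iff]
      constructor
      · rintro ⟨⟨hdk, -⟩, u, rfl⟩
        exact ⟨u, (padicValNat_dvd_iff_le hk).1 ((dvd_mul_left _ _).trans hdk), rfl⟩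
      · rintro ⟨u, hu, rfl⟩
        refine ⟨⟨?_, hk⟩, u, rfl⟩
        exact (hk₀.pow_right u).mul_dvd_of_dvd_of_dvd hdvd ((padicValNat_dvd_iff_le hk).2 hu)
    have hinj : Set.InjOn (k₀ * p ^ ·) (range (padicValNat p k + 1)) := fun u _ w _ h =>
      Nat.pow_right_injective (Fact.out : p.Prime).two_le (Nat.eq_of_mul_eq_mul_left hk₀pos h)
    rw [hfilter, sum_image hinj]
    exact sum_congr rfl fun u _ => by rw [padicValNat_mul_pow_of_coprime hk₀ hk₀pos]
  · refine sum_eq_zero fun d hd => ?_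
    obtain ⟨hdk, u, rfl⟩ := mem_filter.1 hd
    exact absurd ((dvd_mul_right _ _).trans (Nat.dvd_of_mem_divisors hdk)) hdvd

open Classical in
theorem sum_divisors_moebius_mul_eq_backwardDiff (hk₀ : k₀.Coprime p) (hk₀pos : 0 < k₀)
    (g G : ℕ → ℤ) (hG : ∀ k, G k = if k₀ ∣ k then g (padicValNat p k) else 0) {k : ℕ}
    (hk : 0 < k) :
    ∑ d ∈ k.divisors, (moebius d : ℤ) * G (k / d) =
      if ∃ u, k = k₀ * p ^ u then backwardDiff g (padicValNat p k) else 0 := by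
  have hinv := (sum_eq_iff_sum_mul_moebius_eq
    (f := fun d => if ∃ u, d = k₀ * p ^ u then backwardDiff g (padicValNat p d) else 0)
    (g := G)).1 fun k hk => by
      rw [sum_divisors_ite_exists_eq_mul_pow hk₀ hk₀pos _ hk.ne', hG, sum_range_backwardDiff]
  rw [← Nat.sum_divisorsAntidiagonal fun d e => (moebius d : ℤ) * G e]
  exact hinv k hk

end Divisors

section TildeLambda

variable {p n a b : ℕ}

-- `λ̃_k` for `k₀ ∣ k` and `v(k) = v`.
def tildeLambda (p n a b v : ℕ) : ℤ :=
  (p : ℤ) ^ (min (v + a) n + min (v + b) n) -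
    (p : ℤ) ^ (min (v + a) (n - 1) + min (v + b) (n - 1))

theorem tildeLambda_of_lt (hab : a ≤ b) {v : ℕ} (h : v < n - b) :
    tildeLambda p n a b v = 0 := by
  rw [tildeLambda, show min (v + a) (n - 1) + min (v + b) (n - 1) =
    min (v + a) n + min (v + b) n by omega, sub_self]

theorem tildeLambda_of_le_of_lt {v : ℕ} (h₁ : n - b ≤ v) (h₂ : v < n - a) :
    tildeLambda p n a b v = ((p : ℤ) - 1) * (p : ℤ) ^ (n + v + a - 1) := by
  rw [tildeLambda, show min (v + a) n + min (v + b) n = (n + v + a - 1) + 1 by omega,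
    show min (v + a) (n - 1) + min (v + b) (n - 1) = n + v + a - 1 by omega, pow_succ]
  ring

theorem tildeLambda_of_le (hab : a ≤ b) {v : ℕ} (h : n - a ≤ v) :
    tildeLambda p n a b v = (p : ℤ) ^ (2 * n) - (p : ℤ) ^ (2 * n - 2) := by
  rw [tildeLambda, show min (v + a) n + min (v + b) n = 2 * n by omega,
    show min (v + a) (n - 1) + min (v + b) (n - 1) = 2 * n - 2 by omega]

theorem backwardDiff_tildeLambda_of_lt (hab : a ≤ b) {u : ℕ} (h : u < n - b) :
    backwardDiff (tildeLambda p n a b) u = 0 := by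
  rw [backwardDiff_eq_self fun w hw => tildeLambda_of_lt hab (hw.trans h), tildeLambda_of_lt hab h]

theorem backwardDiff_tildeLambda_of_gt (hab : a ≤ b) {u : ℕ} (h : n - a < u) :
    backwardDiff (tildeLambda p n a b) u = 0 := by
  obtain ⟨w, rfl⟩ : ∃ w, u = w + 1 := ⟨u - 1, by omega⟩
  rw [backwardDiff, tildeLambda_of_le hab (by omega), tildeLambda_of_le hab (by omega), sub_self]

theorem backwardDiff_tildeLambda_sub_right (hab : a < b) (hb : b ≤ n) :
    backwardDiff (tildeLambda p n a b) (n - b) =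
      ((p : ℤ) - 1) * (p : ℤ) ^ (2 * n + a - b - 1) := by
  rw [backwardDiff_eq_self fun w hw => tildeLambda_of_lt hab.le hw,
    tildeLambda_of_le_of_lt le_rfl (by omega),
    show n + (n - b) + a - 1 = 2 * n + a - b - 1 by omega]

theorem backwardDiff_tildeLambda_of_lt_of_lt {u : ℕ} (h₁ : n - b < u) (h₂ : u < n - a) :
    backwardDiff (tildeLambda p n a b) u = ((p : ℤ) - 1) ^ 2 * (p : ℤ) ^ (n + u + a - 2) := by
  obtain ⟨w, rfl⟩ : ∃ w, u = w + 1 := ⟨u - 1, by omega⟩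
  rw [backwardDiff, tildeLambda_of_le_of_lt h₁.le h₂,
    tildeLambda_of_le_of_lt (by omega) (by omega),
    show n + (w + 1) + a - 1 = (n + w + a - 1) + 1 by omega,
    show n + (w + 1) + a - 2 = n + w + a - 1 by omega, pow_succ]
  ring

theorem backwardDiff_tildeLambda_sub_left (hab : a < b) (hb : b ≤ n) :
    backwardDiff (tildeLambda p n a b) (n - a) = ((p : ℤ) - 1) * (p : ℤ) ^ (2 * n - 1) := by
  obtain ⟨w, hw⟩ : ∃ w, n - a = w + 1 := ⟨n - a - 1, by omega⟩
  obtain ⟨e, he⟩ : ∃ e, 2 * n = e + 2 := ⟨2 * n - 2, by omega⟩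
  rw [hw, backwardDiff, tildeLambda_of_le hab.le (by omega),
    tildeLambda_of_le_of_lt (by omega) (by omega), show n + w + a - 1 = e by omega, he,
    show e + 2 - 2 = e by omega, show e + 2 - 1 = e + 1 by omega]
  ring

end TildeLambda

theorem stmt_11_general (p : ℕ) (hp : p.Prime) (k₀ n a b : ℕ) (hk₀ : Nat.Coprime k₀ p)
    (hk₀pos : 0 < k₀) (hab : a < b) (hb : b ≤ n)
    (ℓ0 ℓ1 : ℕ → ℕ)
    (hℓ0 : ∀ k, ℓ0 k = if k₀ ∣ k then
        min (padicValNat p k + a) n + min (padicValNat p k + b) n else 0)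
    (hℓ1 : ∀ k, ℓ1 k = if k₀ ∣ k then
        min (padicValNat p k + a) (n - 1) + min (padicValNat p k + b) (n - 1) else 0)
    (lam : ℕ → ℤ)
    (hlam : ∀ k, lam k = ∑ d ∈ k.divisors,
        (ArithmeticFunction.moebius d : ℤ) *
          ((p : ℤ) ^ ℓ0 (k / d) - (p : ℤ) ^ ℓ1 (k / d))) :
    lam (k₀ * p ^ (n - b)) = ((p : ℤ) - 1) * (p : ℤ) ^ (2 * n + a - b - 1) ∧
    (∀ u : ℕ, n - b < u → u < n - a →
        lam (k₀ * p ^ u) = ((p : ℤ) - 1) ^ 2 * (p : ℤ) ^ (n + u + a - 2)) ∧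
    lam (k₀ * p ^ (n - a)) = ((p : ℤ) - 1) * (p : ℤ) ^ (2 * n - 1) ∧
    (∀ k : ℕ, 1 ≤ k → (¬ ∃ u : ℕ, n - b ≤ u ∧ u ≤ n - a ∧ k = k₀ * p ^ u) →
        lam k = 0) := by
  have := Fact.mk hp
  have hG : ∀ k, (p : ℤ) ^ ℓ0 k - (p : ℤ) ^ ℓ1 k =
      if k₀ ∣ k then tildeLambda p n a b (padicValNat p k) else 0 := fun k => by
    rw [hℓ0, hℓ1]; split_ifs <;> simp [tildeLambda]
  have hlam_pow (u : ℕ) : lam (k₀ * p ^ u) = backwardDiff (tildeLambda p n a b) u := by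
    rw [hlam, sum_divisors_moebius_mul_eq_backwardDiff hk₀ hk₀pos _ _ hG
      (Nat.mul_pos hk₀pos (pow_pos hp.pos u)), if_pos ⟨u, rfl⟩,
      padicValNat_mul_pow_of_coprime hk₀ hk₀pos]
  refine ⟨by rw [hlam_pow, backwardDiff_tildeLambda_sub_right hab hb],
    fun u h₁ h₂ => by rw [hlam_pow, backwardDiff_tildeLambda_of_lt_of_lt h₁ h₂],
    by rw [hlam_pow, backwardDiff_tildeLambda_sub_left hab hb], fun k hk hk_not => ?_⟩
  rw [hlam, sum_divisors_moebius_mul_eq_backwardDiff hk₀ hk₀pos _ _ hG hk]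
  split_ifs with hk_pow
  · obtain ⟨u, rfl⟩ := hk_pow
    rw [padicValNat_mul_pow_of_coprime hk₀ hk₀pos]
    rcases lt_or_ge u (n - b) with h | h
    · exact backwardDiff_tildeLambda_of_lt hab.le h
    · exact backwardDiff_tildeLambda_of_gt hab.le (not_le.1 fun h' => hk_not ⟨u, h, h', rfl⟩)
  · rfl

/-- Möbius-inversion computation of `λ_k` in the case `a < b`: with
`ℓ⁰_k = e_{k₀}(k)(min(v(k)+a,n) + min(v(k)+b,n))`,
`ℓ¹_k = e_{k₀}(k)(min(v(k)+a,n-1) + min(v(k)+b,n-1))`,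
`λ̃_k = p^{ℓ⁰_k} - p^{ℓ¹_k}` and `λ_k = Σ_{d∣k} μ(d)λ̃_{k/d}`, one has
`λ_{k₀p^{n-b}} = (p-1)p^{2n+a-b-1}`, `λ_{k₀p^u} = (p-1)²p^{n+u+a-2}` for `n-b < u < n-a`,
`λ_{k₀p^{n-a}} = (p-1)p^{2n-1}`, and `λ_k = 0` for all other `k`. -/
theorem stmt_11 (p : ℕ) (hp : p.Prime) (k₀ n a b : ℕ) (hk₀ : Nat.Coprime k₀ p)
    (hk₀pos : 0 < k₀) (hn : 1 ≤ n) (hab : a < b) (hb : b ≤ n)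
    (ℓ0 ℓ1 : ℕ → ℕ)
    (hℓ0 : ∀ k, ℓ0 k = if k₀ ∣ k then
        min (padicValNat p k + a) n + min (padicValNat p k + b) n else 0)
    (hℓ1 : ∀ k, ℓ1 k = if k₀ ∣ k then
        min (padicValNat p k + a) (n - 1) + min (padicValNat p k + b) (n - 1) else 0)
    (lam : ℕ → ℤ)
    (hlam : ∀ k, lam k = ∑ d ∈ k.divisors,
        (ArithmeticFunction.moebius d : ℤ) *
          ((p : ℤ) ^ ℓ0 (k / d) - (p : ℤ) ^ ℓ1 (k / d))) :
    lam (k₀ * p ^ (n - b)) = ((p : ℤ) - 1) * (p : ℤ) ^ (2 * n + a - b - 1) ∧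
    (∀ u : ℕ, n - b < u → u < n - a →
        lam (k₀ * p ^ u) = ((p : ℤ) - 1) ^ 2 * (p : ℤ) ^ (n + u + a - 2)) ∧
    lam (k₀ * p ^ (n - a)) = ((p : ℤ) - 1) * (p : ℤ) ^ (2 * n - 1) ∧
    (∀ k : ℕ, 1 ≤ k → (¬ ∃ u : ℕ, n - b ≤ u ∧ u ≤ n - a ∧ k = k₀ * p ^ u) →
        lam k = 0) :=
  stmt_11_general p hp k₀ n a b hk₀ hk₀pos hab hb ℓ0 ℓ1 hℓ0 hℓ1 lam hlam
end

section
/- Let p be a prime, α ∈ ℤ_p^× and μ ≥ 0, and let g be the 2×2 matrix over ℤ_p[x] with rows (α, x) and (p^μ, α). Then for all k ≥ 1, g^k has the form with rows (r_k, x·s_k) and (p^μ·s_k, r_k), where r_k(x) = Σ_{i≥0} C(k,2i) α^{k-2i} p^{μi} x^i and s_k(x) = Σ_{i≥0} C(k,2i+1) α^{k-2i-1} p^{μi} x^i. -/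
/-!
Since `g = α + N` with `N = !![0, x; p^μ, 0]` and `N² = p^μ x`, the powers of `g` lie in the
commutative algebra `ℤ_p[x][N]` and `g^k = r_k + s_k N`, where `r_k`, `s_k` are the even and odd
parts of the binomial expansion of `(α + √(p^μ x))^k`. Concretely, `g^(k+1) = g^k g` gives
`r_(k+1) = α r_k + p^μ x s_k` and `s_(k+1) = r_k + α s_k`, which Pascal's rule verifies
coefficientwise.
-/

open Polynomial

namespace BinomialParts

variable {R : Type*} [CommRing R]

theorem choose_succ_succ_mul_pow (a : R) (k j : ℕ) :
    ((k + 1).choose (j + 1) : R) * a ^ (k - j) =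
      k.choose j * a ^ (k - j) + a * (k.choose (j + 1) * a ^ (k - (j + 1))) := by
  rw [Nat.choose_succ_succ', Nat.cast_add, add_mul]
  congr 1
  rcases lt_or_ge j k with hjk | hkj
  · rw [show k - j = k - (j + 1) + 1 by omega, pow_succ]
    ring
  · simp [Nat.choose_eq_zero_of_lt (show k < j + 1 by omega)]

noncomputable def evenPart (a b : R) (k : ℕ) : R[X] :=
  ∑ i ∈ Finset.range (k + 1), C ((k.choose (2 * i) : R) * a ^ (k - 2 * i) * b ^ i) * X ^ i

noncomputable def oddPart (a b : R) (k : ℕ) : R[X] :=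
  ∑ i ∈ Finset.range (k + 1),
    C ((k.choose (2 * i + 1) : R) * a ^ (k - (2 * i + 1)) * b ^ i) * X ^ i

variable (a b : R)

-- The sums may run over all `i`: the binomial coefficients vanish for `i > k`.
theorem coeff_evenPart (k n : ℕ) :
    (evenPart a b k).coeff n = k.choose (2 * n) * a ^ (k - 2 * n) * b ^ n := by
  simp only [evenPart, finsetSum_coeff, coeff_C_mul_X_pow, Finset.sum_ite_eq,
    Finset.mem_range]
  split_ifs with hn
  · rfl
  · simp [Nat.choose_eq_zero_of_lt (show k < 2 * n by omega)]

theorem coeff_oddPart (k n : ℕ) :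
    (oddPart a b k).coeff n = k.choose (2 * n + 1) * a ^ (k - (2 * n + 1)) * b ^ n := by
  simp only [oddPart, finsetSum_coeff, coeff_C_mul_X_pow, Finset.sum_ite_eq,
    Finset.mem_range]
  split_ifs with hn
  · rfl
  · simp [Nat.choose_eq_zero_of_lt (show k < 2 * n + 1 by omega)]

theorem evenPart_zero : evenPart a b 0 = 1 := by
  simp [evenPart]

theorem oddPart_zero : oddPart a b 0 = 0 := by
  simp [oddPart]

theorem evenPart_succ (k : ℕ) :
    evenPart a b (k + 1) = C a * evenPart a b k + C b * (X * oddPart a b k) := by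
  ext (_ | m)
  · simp [coeff_evenPart, pow_succ, mul_comm]
  · simp only [coeff_add, coeff_C_mul, coeff_X_mul, coeff_evenPart, coeff_oddPart,
      show k + 1 - 2 * (m + 1) = k - (2 * m + 1) by omega]
    have := choose_succ_succ_mul_pow a k (2 * m + 1)
    rw [show 2 * (m + 1) = 2 * m + 1 + 1 by ring]
    linear_combination b ^ (m + 1) * this

theorem oddPart_succ (k : ℕ) :
    oddPart a b (k + 1) = evenPart a b k + C a * oddPart a b k := by
  ext n
  simp only [coeff_add, coeff_C_mul, coeff_evenPart, coeff_oddPart,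
    show k + 1 - (2 * n + 1) = k - 2 * n by omega]
  linear_combination b ^ n * choose_succ_succ_mul_pow a k (2 * n)

theorem pow_eq_evenPart_oddPart (k : ℕ) :
    (!![C a, X; C b, C a] : Matrix (Fin 2) (Fin 2) R[X]) ^ k =
      !![evenPart a b k, X * oddPart a b k; C b * oddPart a b k, evenPart a b k] := by
  induction k with
  | zero =>
    rw [pow_zero, evenPart_zero, oddPart_zero, Matrix.one_fin_two]
    simp
  | succ k ih =>
    rw [pow_succ, ih, Matrix.mul_fin_two, evenPart_succ, oddPart_succ]
    congr 1
    funext i j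
    fin_cases i <;> fin_cases j <;> simp only [Fin.zero_eta, Fin.mk_one,
      Matrix.cons_val_zero, Matrix.cons_val_one] <;> ring

end BinomialParts

open BinomialParts in
theorem stmt_12_general (p : ℕ) [Fact p.Prime] (α : ℤ_[p]) (μ : ℕ) :
    ∀ k : ℕ, 1 ≤ k →
      (!![C α, X; C ((p : ℤ_[p]) ^ μ), C α] :
          Matrix (Fin 2) (Fin 2) (Polynomial ℤ_[p])) ^ k =
        !![∑ i ∈ Finset.range (k + 1),
              C ((k.choose (2 * i) : ℤ_[p]) * α ^ (k - 2 * i) * (p : ℤ_[p]) ^ (μ * i)) * X ^ i,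
            X * ∑ i ∈ Finset.range (k + 1),
              C ((k.choose (2 * i + 1) : ℤ_[p]) * α ^ (k - (2 * i + 1)) *
                (p : ℤ_[p]) ^ (μ * i)) * X ^ i;
            C ((p : ℤ_[p]) ^ μ) * ∑ i ∈ Finset.range (k + 1),
              C ((k.choose (2 * i + 1) : ℤ_[p]) * α ^ (k - (2 * i + 1)) *
                (p : ℤ_[p]) ^ (μ * i)) * X ^ i,
            ∑ i ∈ Finset.range (k + 1),
              C ((k.choose (2 * i) : ℤ_[p]) * α ^ (k - 2 * i) * (p : ℤ_[p]) ^ (μ * i)) * X ^ i] := by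
  intro k _
  simpa only [evenPart, oddPart, pow_mul] using pow_eq_evenPart_oddPart α ((p : ℤ_[p]) ^ μ) k

/-- For `g = !![α, x; p^μ, α]` over `ℤ_p[x]`, for all `k ≥ 1` one has
`g^k = !![r_k, x·s_k; p^μ·s_k, r_k]` where
`r_k(x) = Σᵢ C(k,2i) α^{k-2i} p^{μi} x^i` and `s_k(x) = Σᵢ C(k,2i+1) α^{k-2i-1} p^{μi} x^i`. -/
theorem stmt_12 (p : ℕ) [Fact p.Prime] (α : ℤ_[p]) (hα : IsUnit α) (μ : ℕ) :
    ∀ k : ℕ, 1 ≤ k →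
      (!![C α, X; C ((p : ℤ_[p]) ^ μ), C α] :
          Matrix (Fin 2) (Fin 2) (Polynomial ℤ_[p])) ^ k =
        !![∑ i ∈ Finset.range (k + 1),
              C ((k.choose (2 * i) : ℤ_[p]) * α ^ (k - 2 * i) * (p : ℤ_[p]) ^ (μ * i)) * X ^ i,
            X * ∑ i ∈ Finset.range (k + 1),
              C ((k.choose (2 * i + 1) : ℤ_[p]) * α ^ (k - (2 * i + 1)) *
                (p : ℤ_[p]) ^ (μ * i)) * X ^ i;
            C ((p : ℤ_[p]) ^ μ) * ∑ i ∈ Finset.range (k + 1),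
              C ((k.choose (2 * i + 1) : ℤ_[p]) * α ^ (k - (2 * i + 1)) *
                (p : ℤ_[p]) ^ (μ * i)) * X ^ i,
            ∑ i ∈ Finset.range (k + 1),
              C ((k.choose (2 * i) : ℤ_[p]) * α ^ (k - 2 * i) * (p : ℤ_[p]) ^ (μ * i)) * X ^ i] :=
  stmt_12_general p α μ
end

section
/- Let p be an odd prime, α ∈ ℤ_p^×, μ ≥ 0, and define t_k(x) = (r_k(x)-1)² - x p^μ s_k(x)², where r_k, s_k are the entries of the k-th power of the matrix with rows (α,x),(p^μ,α) (i.e., t_k = det(g^k - 1)). If the order o_ᾱ of α mod p does not divide k, then all roots of t_k in an algebraic closure of ℚ_p have valuation -μ. -/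
/-!
Substituting `u = p^μ x` reduces the claim to the case `μ = 0`: every root of `T_k := t_k|_{μ=0}`
has norm `1`. Since `r_k(Y²) ± Y s_k(Y²) = (α ± Y)^k`, the determinant identity
`r_k(u)² - u s_k(u)² = (α² - u)^k` holds, so `T_k = (α² - u)^k - 2 r_k(u) + 1` has degree `k`,
leading coefficient `±1` and constant term `(α^k - 1)²`, a unit because `o ∤ k`. In an ultrametric
field a root of such a polynomial has norm `1`: for a smaller root the constant term would dominate
the sum, for a larger one the leading term.
-/

open Polynomial

/-- `r_k(x) = Σᵢ C(k,2i) α^{k-2i} p^{μi} x^i`. -/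
noncomputable def rPoly (p : ℕ) [Fact p.Prime] (α : ℤ_[p]) (μ k : ℕ) : Polynomial ℤ_[p] :=
  ∑ i ∈ Finset.range (k + 1),
    C ((k.choose (2 * i) : ℤ_[p]) * α ^ (k - 2 * i) * (p : ℤ_[p]) ^ (μ * i)) * X ^ i

/-- `s_k(x) = Σᵢ C(k,2i+1) α^{k-2i-1} p^{μi} x^i`. -/
noncomputable def sPoly (p : ℕ) [Fact p.Prime] (α : ℤ_[p]) (μ k : ℕ) : Polynomial ℤ_[p] :=
  ∑ i ∈ Finset.range (k + 1),
    C ((k.choose (2 * i + 1) : ℤ_[p]) * α ^ (k - (2 * i + 1)) * (p : ℤ_[p]) ^ (μ * i)) * X ^ i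

/-- `t_k(x) = det(g^k - 1) = (r_k(x) - 1)² - x p^μ s_k(x)²`. -/
noncomputable def tPoly (p : ℕ) [Fact p.Prime] (α : ℤ_[p]) (μ k : ℕ) : Polynomial ℤ_[p] :=
  (rPoly p α μ k - 1) ^ 2 - X * C ((p : ℤ_[p]) ^ μ) * (sPoly p α μ k) ^ 2

lemma IsUltrametricDist.norm_sum_eq_of_forall_norm_lt {ι M : Type*} [SeminormedAddCommGroup M]
    [IsUltrametricDist M] {s : Finset ι} {f : ι → M} {j : ι} (hj : j ∈ s)
    (h : ∀ i ∈ s, i ≠ j → ‖f i‖ < ‖f j‖) : ‖∑ i ∈ s, f i‖ = ‖f j‖ := by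
  classical
  rw [← Finset.add_sum_erase s f hj]
  rcases (s.erase j).eq_empty_or_nonempty with hempty | hne
  · simp [hempty]
  obtain ⟨i, hi, hsum⟩ := exists_norm_finsetSum_le_of_nonempty hne f
  have hlt := hsum.trans_lt (h i (Finset.mem_of_mem_erase hi) (Finset.ne_of_mem_erase hi))
  rw [norm_add_eq_max_of_norm_ne_norm hlt.ne', max_eq_left hlt.le]

lemma Polynomial.norm_eq_one_of_isRoot {L : Type*} [NormedField L] [IsUltrametricDist L]
    {P : L[X]} {n : ℕ} (hdeg : P.natDegree ≤ n) (hle : ∀ i, ‖P.coeff i‖ ≤ 1)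
    (h0 : ‖P.coeff 0‖ = 1) (hn : ‖P.coeff n‖ = 1) {w : L} (hw : P.IsRoot w) : ‖w‖ = 1 := by
  have hsum : ∑ i ∈ Finset.range (n + 1), P.coeff i * w ^ i = 0 := by
    rw [← eval_eq_sum_range' (Nat.lt_succ_of_le hdeg)]; exact hw
  have hterm (i : ℕ) : ‖P.coeff i * w ^ i‖ ≤ ‖w‖ ^ i := by
    rw [norm_mul, norm_pow]; exact mul_le_of_le_one_left (by positivity) (hle i)
  by_contra hne
  rcases lt_or_gt_of_ne hne with hlt | hgt
  · have := IsUltrametricDist.norm_sum_eq_of_forall_norm_lt (f := fun i => P.coeff i * w ^ i)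
      (Finset.mem_range.mpr n.succ_pos) fun i _ hi =>
        (hterm i).trans_lt (by simpa [h0] using pow_lt_one₀ (norm_nonneg w) hlt hi)
    simp [hsum, h0] at this
  · have := IsUltrametricDist.norm_sum_eq_of_forall_norm_lt (f := fun i => P.coeff i * w ^ i)
      (Finset.self_mem_range_succ n) fun i hi _ =>
        (hterm i).trans_lt (by
          rw [norm_mul, norm_pow, hn, one_mul]
          exact pow_lt_pow_right₀ hgt (by have := Finset.mem_range.mp hi; omega))
    rw [hsum, norm_zero, norm_mul, norm_pow, hn, one_mul] at this
    exact (pow_pos (one_pos.trans hgt) n).ne this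

section

variable (p : ℕ) [Fact p.Prime] (α : ℤ_[p]) (μ k : ℕ)

theorem coeff_rPoly (n : ℕ) : (rPoly p α μ k).coeff n =
    (k.choose (2 * n) : ℤ_[p]) * α ^ (k - 2 * n) * (p : ℤ_[p]) ^ (μ * n) := by
  rw [rPoly, finsetSum_coeff]
  simp only [coeff_C_mul_X_pow]
  rw [Finset.sum_ite_eq (Finset.range (k + 1)) n]
  split_ifs with h
  · rfl
  · rw [Nat.choose_eq_zero_of_lt (by rw [Finset.mem_range, not_lt] at h; omega), Nat.cast_zero, zero_mul, zero_mul]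

theorem coeff_sPoly (n : ℕ) : (sPoly p α μ k).coeff n =
    (k.choose (2 * n + 1) : ℤ_[p]) * α ^ (k - (2 * n + 1)) * (p : ℤ_[p]) ^ (μ * n) := by
  rw [sPoly, finsetSum_coeff]
  simp only [coeff_C_mul_X_pow]
  rw [Finset.sum_ite_eq (Finset.range (k + 1)) n]
  split_ifs with h
  · rfl
  · rw [Nat.choose_eq_zero_of_lt (by rw [Finset.mem_range, not_lt] at h; omega), Nat.cast_zero, zero_mul, zero_mul]

theorem rPoly_eq_comp : rPoly p α μ k = (rPoly p α 0 k).comp (C ((p : ℤ_[p]) ^ μ) * X) := by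
  ext n
  rw [comp_C_mul_X_coeff, coeff_rPoly, coeff_rPoly, zero_mul, pow_zero, mul_one, ← pow_mul]

theorem sPoly_eq_comp : sPoly p α μ k = (sPoly p α 0 k).comp (C ((p : ℤ_[p]) ^ μ) * X) := by
  ext n
  rw [comp_C_mul_X_coeff, coeff_sPoly, coeff_sPoly, zero_mul, pow_zero, mul_one, ← pow_mul]

theorem tPoly_eq_comp : tPoly p α μ k = (tPoly p α 0 k).comp (C ((p : ℤ_[p]) ^ μ) * X) := by
  simp only [tPoly, rPoly_eq_comp p α μ k, sPoly_eq_comp p α μ k, sub_comp, pow_comp, mul_comp,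
    one_comp, X_comp, pow_zero, C_1, mul_one]
  ring

theorem expand_rPoly_add_X_mul_expand_sPoly :
    expand ℤ_[p] 2 (rPoly p α 0 k) + X * expand ℤ_[p] 2 (sPoly p α 0 k) = (X + C α) ^ k := by
  ext n
  rw [coeff_X_add_C_pow, coeff_add, coeff_expand two_pos]
  obtain ⟨i, rfl | rfl⟩ := Nat.even_or_odd' n
  · rw [if_pos (dvd_mul_right 2 i), Nat.mul_div_cancel_left i two_pos, coeff_rPoly]
    rcases i with _ | i
    · simp
    · rw [show 2 * (i + 1) = 2 * i + 1 + 1 by ring, coeff_X_mul, coeff_expand two_pos,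
        if_neg (by omega)]
      simp [mul_comm]
  · rw [if_neg (by omega), coeff_X_mul, coeff_expand two_pos, if_pos (dvd_mul_right 2 i),
      Nat.mul_div_cancel_left i two_pos, coeff_sPoly]
    simp [mul_comm]

theorem rPoly_sq_sub_X_mul_sPoly_sq :
    rPoly p α 0 k ^ 2 - X * sPoly p α 0 k ^ 2 = (C (α ^ 2) - X) ^ k := by
  have hplus := expand_rPoly_add_X_mul_expand_sPoly p α k
  have heven (f : ℤ_[p][X]) : (expand ℤ_[p] 2 f).comp (-X) = expand ℤ_[p] 2 f := by
    rw [expand_eq_comp_X_pow, comp_assoc, X_pow_comp, neg_sq]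
  have hminus : expand ℤ_[p] 2 (rPoly p α 0 k) - X * expand ℤ_[p] 2 (sPoly p α 0 k) =
      (-X + C α) ^ k := by
    simpa [heven, sub_eq_add_neg] using congrArg (·.comp (-X)) hplus
  apply expand_injective two_pos
  have hconj : expand ℤ_[p] 2 ((C (α ^ 2) - X) ^ k) = (X + C α) ^ k * (-X + C α) ^ k := by
    rw [← mul_pow, map_pow, map_sub, expand_C, expand_X, C_pow]
    ring
  rw [hconj, map_sub, map_mul, map_pow, map_pow, expand_X]
  linear_combination (expand ℤ_[p] 2 (rPoly p α 0 k) - X * expand ℤ_[p] 2 (sPoly p α 0 k)) * hplus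
    + (X + C α) ^ k * hminus

theorem tPoly_zero_eq : tPoly p α 0 k = (C (α ^ 2) - X) ^ k - 2 * rPoly p α 0 k + 1 := by
  rw [← rPoly_sq_sub_X_mul_sPoly_sq, tPoly, pow_zero, C_1, mul_one]
  ring

theorem natDegree_rPoly_le : (rPoly p α μ k).natDegree ≤ k := by
  rw [natDegree_le_iff_coeff_eq_zero]
  intro n hn
  rw [coeff_rPoly, Nat.choose_eq_zero_of_lt (by omega), Nat.cast_zero, zero_mul, zero_mul]

theorem natDegree_tPoly_zero_le : (tPoly p α 0 k).natDegree ≤ k := by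
  rw [tPoly_zero_eq]
  have hlin : (C (α ^ 2) - X).natDegree ≤ 1 := by compute_degree!
  have hpow : ((C (α ^ 2) - X) ^ k).natDegree ≤ k :=
    (natDegree_pow_le_of_le k hlin).trans_eq (mul_one k)
  have hr : (2 * rPoly p α 0 k).natDegree ≤ k :=
    (natDegree_mul_le_of_le (natDegree_ofNat 2).le (natDegree_rPoly_le p α 0 k)).trans_eq
      (zero_add k)
  exact natDegree_add_le_of_degree_le ((natDegree_sub_le_of_le hpow hr).trans_eq (max_self k))
    (by simp)

theorem coeff_tPoly_zero_self (hk : k ≠ 0) : (tPoly p α 0 k).coeff k = (-1) ^ k := by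
  have hlin : C (α ^ 2) - X = C (-1) * (X + C (-α ^ 2)) := by rw [C_neg, C_neg, C_1]; ring
  rw [tPoly_zero_eq, coeff_add, coeff_sub, coeff_one, if_neg hk, hlin, mul_pow, ← C_pow,
    coeff_C_mul, coeff_X_add_C_pow, coeff_ofNat_mul, coeff_rPoly,
    Nat.choose_eq_zero_of_lt (show k < 2 * k by omega)]
  simp

theorem eval_zero_tPoly : (tPoly p α μ k).eval 0 = (α ^ k - 1) ^ 2 := by
  simp [tPoly, ← coeff_zero_eq_eval_zero, coeff_rPoly]

end

theorem stmt_13_general (p : ℕ) [Fact p.Prime] (α : ℤ_[p]) (μ : ℕ)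
    (o : ℕ)
    (hoa : ∀ m : ℕ, 0 < m → ((p : ℤ_[p]) ∣ α ^ m - 1 ↔ o ∣ m))
    (k : ℕ) (hk : 1 ≤ k) (hok : ¬ o ∣ k)
    (L : Type*) [NormedField L] [Algebra ℚ_[p] L]
    (hL : ∀ x : ℚ_[p], ‖algebraMap ℚ_[p] L x‖ = ‖x‖)
    (z : L)
    (hz : Polynomial.aeval z ((tPoly p α μ k).map (algebraMap ℤ_[p] ℚ_[p])) = 0) :
    ‖z‖ = (p : ℝ) ^ (μ : ℤ) := by
  set f : ℤ_[p] →+* L := (algebraMap ℚ_[p] L).comp (algebraMap ℤ_[p] ℚ_[p])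
  have hf (a : ℤ_[p]) : ‖f a‖ = ‖a‖ := by simp [f, hL]
  have : IsUltrametricDist L :=
    IsUltrametricDist.isUltrametricDist_of_forall_norm_natCast_le_one fun n => by
      rw [← map_natCast f n, hf]; exact PadicInt.norm_le_one _
  have hroot : ((tPoly p α 0 k).map f).IsRoot (f ((p : ℤ_[p]) ^ μ) * z) := by
    rw [aeval_def, eval₂_map, tPoly_eq_comp, eval₂_comp, eval₂_mul, eval₂_C, eval₂_X] at hz
    rwa [IsRoot, eval_map]
  have hunit : ‖α ^ k - 1‖ = 1 := le_antisymm (PadicInt.norm_le_one _) <| not_lt.mp fun h =>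
    hok ((hoa k hk).mp ((PadicInt.norm_lt_one_iff_dvd _).mp h))
  have hw := norm_eq_one_of_isRoot (natDegree_map_le.trans (natDegree_tPoly_zero_le p α k))
    (fun i => by rw [coeff_map, hf]; exact PadicInt.norm_le_one _)
    (by rw [coeff_map, hf, coeff_zero_eq_eval_zero, eval_zero_tPoly, norm_pow, hunit, one_pow])
    (by rw [coeff_map, hf, coeff_tPoly_zero_self p α k (by omega)]; simp) hroot
  have hp : (p : ℝ) ^ μ ≠ 0 := pow_ne_zero _ (Nat.cast_ne_zero.mpr (Fact.out : p.Prime).ne_zero)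
  rw [norm_mul, hf, norm_pow, PadicInt.norm_p, inv_pow, inv_mul_eq_one₀ hp] at hw
  rw [zpow_natCast, hw]

/-- Let `p` be an odd prime, `α ∈ ℤ_p^×`, `μ ≥ 0`, and `t_k = det(g^k - 1)` for
`g = !![α, x; p^μ, α]`.  If the order `o` of `α` mod `p` does not divide `k`, then every
root of `t_k` (in any field with a multiplicative norm extending the `p`-adic one, e.g. an
algebraic closure of `ℚ_p`) has valuation `-μ`, i.e. norm `p^μ`. -/
theorem stmt_13 (p : ℕ) [Fact p.Prime] (hp : p ≠ 2) (α : ℤ_[p]) (hα : IsUnit α) (μ : ℕ)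
    (o : ℕ) (ho : 0 < o)
    (hoa : ∀ m : ℕ, 0 < m → ((p : ℤ_[p]) ∣ α ^ m - 1 ↔ o ∣ m))
    (k : ℕ) (hk : 1 ≤ k) (hok : ¬ o ∣ k)
    (L : Type*) [NormedField L] [Algebra ℚ_[p] L]
    (hL : ∀ x : ℚ_[p], ‖algebraMap ℚ_[p] L x‖ = ‖x‖)
    (z : L)
    (hz : Polynomial.aeval z ((tPoly p α μ k).map (algebraMap ℤ_[p] ℚ_[p])) = 0) :
    ‖z‖ = (p : ℝ) ^ (μ : ℤ) :=
  stmt_13_general p α μ o hoa k hk hok L hL z hz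
end

section
/- Let p be an odd prime, α ∈ ℤ_p^× with o_ᾱ | k and v_α = v(α^{o_ᾱ}-1), μ ≥ 0 with 2v_α - μ > 2/(p-1) - μ. Let t_k(x) = det(g^k - 1) for g the matrix with rows (α,x),(p^μ,α). Then t_k has a unique root z of maximal valuation; z lies in ℚ_p, is independent of k (among k divisible by o_ᾱ), has valuation 2v_α - μ, and all other roots of t_k have valuation at most 2/(p-1) - μ. -/
open Polynomial

/-!
The eigenvalues of `g` are `α ± y` with `y² = x p^μ`, so `t_k(x) = ((α + y)^k - 1)((α - y)^k - 1)`.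
Let `ζ` be the `o`-th root of unity lifting `ᾱ` (Hensel); then `‖α - ζ‖ = ‖α^o - 1‖`, and
`z = (ζ - α)² / p^μ` is a root of every `t_k` with `o ∣ k`, because `(α + (ζ - α))^k = ζ^k = 1`.
Conversely, if `w` is a root with `‖w p^μ‖ < p^{-2/(p-1)}`, then `s_k(w)` is dominated by its
constant term `k α^{k-1}`, so `y = (1 - r_k(w)) / s_k(w)` is a square root of `w p^μ` with
`(α + y)^k = 1`. Then `(α + y) / ζ` is a root of unity at distance less than `p^{-1/(p-1)}`
from `1`, hence equal to `1`, which forces `y = ζ - α` and `w = z`.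
-/

open Finset

theorem Finset.sum_range_two_mul {M : Type*} [AddCommMonoid M] (n : ℕ) (f : ℕ → M) :
    ∑ j ∈ range (2 * n), f j = ∑ i ∈ range n, (f (2 * i) + f (2 * i + 1)) := by
  induction n with
  | zero => simp
  | succ n ih => rw [Nat.mul_succ, sum_range_succ, sum_range_succ, sum_range_succ, ih, add_assoc]

section Expansion

variable {p : ℕ} [Fact p.Prime] (α : ℤ_[p]) (μ k : ℕ) {A : Type*} [CommRing A]
  (f : ℤ_[p] →+* A) (x : A)

lemma rPoly_eval₂ : (rPoly p α μ k).eval₂ f x =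
    ∑ i ∈ range (k + 1), (k.choose (2 * i) : A) * f α ^ (k - 2 * i) * (x * f p ^ μ) ^ i := by
  rw [rPoly, eval₂_finsetSum]
  refine sum_congr rfl fun i _ => ?_
  rw [eval₂_mul, eval₂_C, eval₂_X_pow]
  simp only [map_mul, map_pow, map_natCast]
  ring

lemma sPoly_eval₂ : (sPoly p α μ k).eval₂ f x =
    ∑ i ∈ range (k + 1),
      (k.choose (2 * i + 1) : A) * f α ^ (k - (2 * i + 1)) * (x * f p ^ μ) ^ i := by
  rw [sPoly, eval₂_finsetSum]
  refine sum_congr rfl fun i _ => ?_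
  rw [eval₂_mul, eval₂_C, eval₂_X_pow]
  simp only [map_mul, map_pow, map_natCast]
  ring

lemma tPoly_eval₂ : (tPoly p α μ k).eval₂ f x =
    ((rPoly p α μ k).eval₂ f x - 1) ^ 2 - x * f p ^ μ * ((sPoly p α μ k).eval₂ f x) ^ 2 := by
  simp [tPoly, eval₂_sub, eval₂_pow, eval₂_mul]

variable {α μ k f x}

lemma add_pow_eq_rPoly_eval₂_add_mul_sPoly_eval₂ {y : A} (hy : y ^ 2 = x * f p ^ μ) :
    (f α + y) ^ k = (rPoly p α μ k).eval₂ f x + y * (sPoly p α μ k).eval₂ f x := by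
  have hchoose : ∀ j ∈ range (2 * (k + 1)), j ∉ range (k + 1) →
      y ^ j * f α ^ (k - j) * (k.choose j : A) = 0 := fun j _ hj => by
    rw [Nat.choose_eq_zero_of_lt (by simpa using hj), Nat.cast_zero, mul_zero]
  rw [add_comm, add_pow, sum_subset (range_subset_range.2 (by omega)) hchoose,
    sum_range_two_mul, rPoly_eval₂, sPoly_eval₂, mul_sum, ← sum_add_distrib]
  refine sum_congr rfl fun i _ => ?_
  rw [pow_succ, pow_mul, hy]
  ring

lemma tPoly_eval₂_eq_zero_of_add_pow_eq_one {y : A} (hy : y ^ 2 = x * f p ^ μ)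
    (hk : (f α + y) ^ k = 1) : (tPoly p α μ k).eval₂ f x = 0 := by
  rw [tPoly_eval₂, ← hy]
  linear_combination ((rPoly p α μ k).eval₂ f x - y * (sPoly p α μ k).eval₂ f x - 1) *
    (add_pow_eq_rPoly_eval₂_add_mul_sPoly_eval₂ hy).symm.trans hk

end Expansion

lemma exists_add_pow_eq_one_of_tPoly_eval₂_eq_zero {p : ℕ} [Fact p.Prime] {α : ℤ_[p]} {μ k : ℕ}
    {K : Type*} [Field K] {f : ℤ_[p] →+* K} {x : K} (ht : (tPoly p α μ k).eval₂ f x = 0)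
    (hs : (sPoly p α μ k).eval₂ f x ≠ 0) :
    ∃ y : K, y ^ 2 = x * f p ^ μ ∧ (f α + y) ^ k = 1 := by
  set r := (rPoly p α μ k).eval₂ f x
  set s := (sPoly p α μ k).eval₂ f x
  have hy : ((1 - r) / s) ^ 2 = x * f p ^ μ := by
    rw [tPoly_eval₂] at ht
    field_simp
    linear_combination ht
  refine ⟨(1 - r) / s, hy, ?_⟩
  rw [add_pow_eq_rPoly_eval₂_add_mul_sPoly_eval₂ hy, div_mul_cancel₀ _ hs]
  ring

section Ultrametric

variable {R : Type*} [NormedRing R] [NormOneClass R] [IsUltrametricDist R]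

lemma norm_pow_sub_one_le {x : R} (hx : ‖x‖ ≤ 1) (n : ℕ) : ‖x ^ n - 1‖ ≤ ‖x - 1‖ := by
  rw [← geom_sum_mul]
  refine (norm_mul_le _ _).trans (mul_le_of_le_one_left (norm_nonneg _) ?_)
  exact IsUltrametricDist.norm_sum_le_of_forall_le_of_nonneg zero_le_one fun i _ =>
    (norm_pow_le x i).trans (pow_le_one₀ (norm_nonneg x) hx)

lemma norm_le_one_of_norm_sub_one_lt_one {x : R} (hx : ‖x - 1‖ < 1) : ‖x‖ ≤ 1 := by
  simpa [hx.le] using IsUltrametricDist.norm_add_le_max (x - 1) 1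

lemma norm_geom_sum_eq_one {x : R} (hx : ‖x - 1‖ < 1) {n : ℕ} (hn : ‖(n : R)‖ = 1) :
    ‖∑ i ∈ range n, x ^ i‖ = 1 := by
  have hsmall : ‖∑ i ∈ range n, (x ^ i - 1)‖ < 1 :=
    (IsUltrametricDist.norm_sum_le_of_forall_le_of_nonneg (norm_nonneg _) fun i _ =>
      norm_pow_sub_one_le (norm_le_one_of_norm_sub_one_lt_one hx) i).trans_lt hx
  have hsplit : ∑ i ∈ range n, x ^ i = n + ∑ i ∈ range n, (x ^ i - 1) := by
    simp [sum_sub_distrib]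
  rw [hsplit, IsUltrametricDist.norm_add_eq_max_of_norm_ne_norm (by rw [hn]; exact hsmall.ne'),
    hn, max_eq_left hsmall.le]

end Ultrametric

lemma eq_one_of_pow_eq_one_of_norm_natCast_eq_one {L : Type*} [NormedField L]
    [IsUltrametricDist L] {δ : L} {n : ℕ} (hδ : δ ^ n = 1) (hn : ‖(n : L)‖ = 1)
    (h : ‖δ - 1‖ < 1) : δ = 1 := by
  have hgeom : (∑ i ∈ range n, δ ^ i) * (δ - 1) = 0 := by rw [geom_sum_mul, hδ, sub_self]
  have hne : ∑ i ∈ range n, δ ^ i ≠ 0 :=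
    norm_ne_zero_iff.1 (by rw [norm_geom_sum_eq_one h hn]; exact one_ne_zero)
  exact sub_eq_zero.1 ((mul_eq_zero.1 hgeom).resolve_left hne)

/-- The radius `p^{-1/(p-1)}` of the largest open disc around `1` containing no `p`-th root of unity
other than `1`. -/
noncomputable def rootRadius (p : ℕ) : ℝ := (p : ℝ) ^ (-((p : ℝ) - 1)⁻¹)

section Padic

variable {p : ℕ} [hp : Fact p.Prime]

lemma rootRadius_pos : 0 < rootRadius p := Real.rpow_pos_of_pos (by exact_mod_cast hp.out.pos) _

lemma rootRadius_pow_sub_one : rootRadius p ^ (p - 1) = (p : ℝ)⁻¹ := by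
  have hp1 : (1 : ℝ) < p := by exact_mod_cast hp.out.one_lt
  rw [rootRadius, ← Real.rpow_mul_natCast (by positivity), Nat.cast_sub hp.out.one_le,
    Nat.cast_one, neg_mul, inv_mul_cancel₀ (by linarith), Real.rpow_neg_one]

lemma rootRadius_lt_one : rootRadius p < 1 := by
  have hp1 : (1 : ℝ) < p := by exact_mod_cast hp.out.one_lt
  exact Real.rpow_lt_one_of_one_lt_of_neg hp1 (neg_neg_of_pos (inv_pos.2 (by linarith)))

lemma zpow_neg_lt_rootRadius {v : ℤ} (hv : ((p : ℝ) - 1)⁻¹ < v) :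
    (p : ℝ) ^ (-v) < rootRadius p := by
  rw [rootRadius, ← Real.rpow_intCast, Int.cast_neg]
  exact Real.rpow_lt_rpow_of_exponent_lt (by exact_mod_cast hp.out.one_lt) (neg_lt_neg hv)

lemma rootRadius_sq_mul_pow (μ : ℕ) :
    rootRadius p ^ 2 * (p : ℝ) ^ μ = (p : ℝ) ^ ((μ : ℝ) - 2 / ((p : ℝ) - 1)) := by
  have hp0 : (0 : ℝ) < p := by exact_mod_cast hp.out.pos
  rw [rootRadius, ← Real.rpow_mul_natCast hp0.le, ← Real.rpow_natCast _ μ,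
    ← Real.rpow_add hp0]
  ring_nf

lemma eq_one_of_pow_prime_eq_one {L : Type*} [NormedField L] [IsUltrametricDist L]
    (hpL : ‖(p : L)‖ = (p : ℝ)⁻¹) {δ : L} (hδ : δ ^ p = 1) (h : ‖δ - 1‖ < rootRadius p) :
    δ = 1 := by
  by_contra hne
  set ε := δ - 1
  have hε : 0 < ‖ε‖ := norm_pos_iff.2 (sub_ne_zero.2 hne)
  have hε1 : ‖ε‖ < 1 := h.trans rootRadius_lt_one
  have hp2 : 2 ≤ p := hp.out.two_le
  -- in `(1 + ε)^p - 1`, the term `p ε` strictly dominates all the others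
  have hexp : (p : L) * ε = -(∑ j ∈ Ico 2 p, ε ^ j * (p.choose j : L) + ε ^ p) := by
    have h1 := hδ
    rw [show δ = ε + 1 by simp [ε], add_pow] at h1
    simp only [one_pow, mul_one] at h1
    rw [sum_range_succ, range_eq_Ico, sum_eq_sum_Ico_succ_bot (by omega),
      sum_eq_sum_Ico_succ_bot (by omega)] at h1
    simp only [pow_zero, Nat.choose_zero_right, Nat.cast_one, mul_one, zero_add, pow_one,
      Nat.choose_one_right, Nat.choose_self] at h1
    linear_combination h1
  have hmid : ‖∑ j ∈ Ico 2 p, ε ^ j * (p.choose j : L)‖ < (p : ℝ)⁻¹ * ‖ε‖ := by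
    refine lt_of_le_of_lt (IsUltrametricDist.norm_sum_le_of_forall_le_of_nonneg
      (C := (p : ℝ)⁻¹ * ‖ε‖ ^ 2) (by positivity) fun j hj => ?_) ?_
    · obtain ⟨hj2, hjp⟩ := mem_Ico.1 hj
      obtain ⟨t, ht⟩ := hp.out.dvd_choose_self (by omega) hjp
      rw [norm_mul, norm_pow, ht, Nat.cast_mul, norm_mul, hpL, mul_comm]
      exact mul_le_mul (mul_le_of_le_one_right (by positivity)
        (IsUltrametricDist.norm_natCast_le_one L t))
        (pow_le_pow_of_le_one (norm_nonneg _) hε1.le hj2) (by positivity) (by positivity)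
    · rw [sq, ← mul_assoc]
      exact mul_lt_of_lt_one_right (by positivity) hε1
  have htop : ‖ε ^ p‖ < (p : ℝ)⁻¹ * ‖ε‖ := by
    have hsplit : ‖ε‖ ^ p = ‖ε‖ ^ (p - 1) * ‖ε‖ := by
      rw [← pow_succ, Nat.sub_add_cancel hp.out.one_le]
    rw [norm_pow, hsplit, ← rootRadius_pow_sub_one]
    gcongr
    omega
  have := IsUltrametricDist.norm_add_le_max (∑ j ∈ Ico 2 p, ε ^ j * (p.choose j : L)) (ε ^ p)
  rw [← norm_neg, ← hexp, norm_mul, hpL] at this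
  exact (max_lt hmid htop).not_ge this

lemma eq_one_of_pow_eq_one_of_norm_sub_one_lt {L : Type*} [NormedField L] [IsUltrametricDist L]
    {f : ℤ_[p] →+* L} (hf : ∀ a, ‖f a‖ = ‖a‖) {n : ℕ} (hn : n ≠ 0) {δ : L} (hδ : δ ^ n = 1)
    (h : ‖δ - 1‖ < rootRadius p) : δ = 1 := by
  have hnat (m : ℕ) : ‖(m : L)‖ = ‖(m : ℤ_[p])‖ := by rw [← map_natCast f, hf]
  induction n using Nat.strong_induction_on generalizing δ with
  | _ n ih =>
    by_cases hpn : p ∣ n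
    · obtain ⟨m, rfl⟩ := hpn
      have hm : m ≠ 0 := right_ne_zero_of_mul hn
      have hδ1 : ‖δ‖ ≤ 1 := norm_le_one_of_norm_sub_one_lt_one (h.trans rootRadius_lt_one)
      refine eq_one_of_pow_prime_eq_one (by rw [hnat, PadicInt.norm_p]) ?_ h
      exact ih m (lt_mul_left (Nat.pos_of_ne_zero hm) hp.out.one_lt) hm
        (by rw [← pow_mul, hδ]) ((norm_pow_sub_one_le hδ1 p).trans_lt h)
    · refine eq_one_of_pow_eq_one_of_norm_natCast_eq_one hδ ?_ (h.trans rootRadius_lt_one)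
      rw [hnat, PadicInt.norm_natCast_eq_one_iff]
      exact (Nat.coprime_or_dvd_of_prime hp.out n).resolve_right hpn

lemma rootRadius_pow_le_norm_natCast {m : ℕ} (hm : m ≠ 0) :
    rootRadius p ^ (m - 1) ≤ ‖(m : ℤ_[p])‖ := by
  set e := padicValNat p m
  have hnorm : ‖(m : ℤ_[p])‖ = rootRadius p ^ ((p - 1) * e) := by
    rw [PadicInt.norm_def, PadicInt.coe_natCast,
      Padic.norm_eq_zpow_neg_valuation (by exact_mod_cast hm), Padic.valuation_natCast,
      pow_mul, rootRadius_pow_sub_one, zpow_neg, zpow_natCast, inv_pow]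
  have hbern : 1 + (e : ℝ) * ((p : ℝ) - 1) ≤ m := by
    have hpe : p ^ e ≤ m := Nat.le_of_dvd (Nat.pos_of_ne_zero hm) pow_padicValNat_dvd
    calc 1 + (e : ℝ) * ((p : ℝ) - 1) ≤ (1 + ((p : ℝ) - 1)) ^ e :=
          one_add_mul_le_pow (by linarith [(Nat.one_le_cast (α := ℝ)).2 hp.out.one_le]) e
      _ ≤ m := by rw [add_sub_cancel]; exact_mod_cast hpe
  have hexp : (p - 1) * e ≤ m - 1 := by
    have : (((p - 1) * e : ℕ) : ℝ) ≤ ((m - 1 : ℕ) : ℝ) := by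
      rw [Nat.cast_mul, Nat.cast_sub hp.out.one_le, Nat.cast_sub (Nat.one_le_iff_ne_zero.2 hm)]
      push_cast
      linarith
    exact_mod_cast this
  rw [hnorm]
  exact pow_le_pow_of_le_one rootRadius_pos.le rootRadius_lt_one.le hexp

lemma norm_choose_mul_rootRadius_pow_le (k : ℕ) {m : ℕ} (hm : m ≠ 0) :
    ‖(k.choose m : ℤ_[p])‖ * rootRadius p ^ (m - 1) ≤ ‖(k : ℤ_[p])‖ := by
  obtain ⟨j, rfl⟩ := Nat.exists_eq_add_one_of_ne_zero hm
  cases k with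
  | zero => simp
  | succ n =>
    have hid : ((n + 1).choose (j + 1) : ℤ_[p]) * (j + 1 : ℕ) = (n + 1 : ℕ) * (n.choose j) := by
      exact_mod_cast (Nat.add_one_mul_choose_eq n j).symm
    calc ‖((n + 1).choose (j + 1) : ℤ_[p])‖ * rootRadius p ^ (j + 1 - 1)
        ≤ ‖((n + 1).choose (j + 1) : ℤ_[p])‖ * ‖((j + 1 : ℕ) : ℤ_[p])‖ :=
          mul_le_mul_of_nonneg_left (rootRadius_pow_le_norm_natCast hm) (norm_nonneg _)
      _ = ‖((n + 1 : ℕ) : ℤ_[p])‖ * ‖(n.choose j : ℤ_[p])‖ := by rw [← norm_mul, hid, norm_mul]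
      _ ≤ ‖((n + 1 : ℕ) : ℤ_[p])‖ :=
          mul_le_of_le_one_right (norm_nonneg _) (PadicInt.norm_le_one _)

/-- The constant term `k α^{k-1}` of `s_k` strictly dominates all the others. -/
lemma sPoly_eval₂_ne_zero {L : Type*} [NormedField L] [IsUltrametricDist L]
    {f : ℤ_[p] →+* L} (hf : ∀ a, ‖f a‖ = ‖a‖) {α : ℤ_[p]} (hα : ‖α‖ = 1) (μ : ℕ) {k : ℕ}
    (hk : k ≠ 0) {x : L} (hx : ‖x * f p ^ μ‖ < rootRadius p ^ 2) :
    (sPoly p α μ k).eval₂ f x ≠ 0 := by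
  set u := x * f p ^ μ
  set q := ‖u‖ / rootRadius p ^ 2
  have hq : q < 1 := (div_lt_one (by positivity [rootRadius_pos (p := p)])).2 hx
  have hK : 0 < ‖(k : ℤ_[p])‖ := norm_pos_iff.2 (Nat.cast_ne_zero.2 hk)
  have hnat (m : ℕ) : ‖(m : L)‖ = ‖(m : ℤ_[p])‖ := by rw [← map_natCast f, hf]
  have hfα (m : ℕ) : ‖f α ^ m‖ = 1 := by rw [norm_pow, hf, hα, one_pow]
  have hhead : ‖(k.choose (2 * 0 + 1) : L) * f α ^ (k - (2 * 0 + 1)) * u ^ 0‖ = ‖(k : ℤ_[p])‖ := by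
    simp [hnat, hfα]
  have htail : ‖∑ i ∈ range k,
      (k.choose (2 * (i + 1) + 1) : L) * f α ^ (k - (2 * (i + 1) + 1)) * u ^ (i + 1)‖ <
        ‖(k : ℤ_[p])‖ := by
    refine lt_of_le_of_lt (IsUltrametricDist.norm_sum_le_of_forall_le_of_nonneg
      (C := ‖(k : ℤ_[p])‖ * q) (by positivity) fun i _ => ?_) (mul_lt_of_lt_one_right hK hq)
    have hu : ‖u‖ ^ (i + 1) = rootRadius p ^ (2 * (i + 1)) * q ^ (i + 1) := by
      rw [pow_mul, ← mul_pow, mul_div_cancel₀ _ (by positivity [rootRadius_pos (p := p)])]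
    rw [norm_mul, norm_mul, hfα, mul_one, norm_pow, hnat, hu, ← mul_assoc]
    exact mul_le_mul (norm_choose_mul_rootRadius_pow_le k (by omega))
      (pow_le_of_le_one (by positivity) hq.le (by omega)) (by positivity) hK.le
  rw [sPoly_eval₂, sum_range_succ']
  intro hzero
  rw [eq_neg_of_add_eq_zero_right hzero, norm_neg] at hhead
  exact htail.ne hhead

lemma mul_pow_eq_sq_of_tPoly_eval₂_eq_zero {L : Type*} [NormedField L] [IsUltrametricDist L]
    {f : ℤ_[p] →+* L} (hf : ∀ a, ‖f a‖ = ‖a‖) {α ζ : ℤ_[p]} (hα : ‖α‖ = 1) (μ : ℕ) {k : ℕ}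
    (hk : k ≠ 0) (hζ : ζ ^ k = 1) (hαζ : ‖α - ζ‖ < rootRadius p) {x : L}
    (ht : (tPoly p α μ k).eval₂ f x = 0) (hx : ‖x * f p ^ μ‖ < rootRadius p ^ 2) :
    x * f p ^ μ = f (ζ - α) ^ 2 := by
  obtain ⟨y, hy2, hyk⟩ :=
    exists_add_pow_eq_one_of_tPoly_eval₂_eq_zero ht (sPoly_eval₂_ne_zero hf hα μ hk hx)
  have hy : ‖y‖ < rootRadius p := by
    rw [← pow_lt_pow_iff_left₀ (norm_nonneg _) rootRadius_pos.le two_ne_zero, ← norm_pow, hy2]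
    exact hx
  have hfζ : ‖f ζ‖ = 1 := by
    rw [hf]; exact (isOfFinOrder_iff_pow_eq_one.2 ⟨k, Nat.pos_of_ne_zero hk, hζ⟩).norm_eq_one
  have hfζ0 : f ζ ≠ 0 := norm_ne_zero_iff.1 (by rw [hfζ]; exact one_ne_zero)
  have hδk : ((f α + y) / f ζ) ^ k = 1 := by rw [div_pow, hyk, ← map_pow, hζ, map_one, div_one]
  have hδ1 : ‖(f α + y) / f ζ - 1‖ < rootRadius p := by
    rw [div_sub_one hfζ0, norm_div, hfζ, div_one, show f α + y - f ζ = f (α - ζ) + y by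
      rw [map_sub]; ring]
    exact (IsUltrametricDist.norm_add_le_max _ _).trans_lt (max_lt (by rwa [hf]) hy)
  have hyζ : y = f (ζ - α) := by
    have hδ := eq_one_of_pow_eq_one_of_norm_sub_one_lt hf hk hδk hδ1
    rw [div_eq_one_iff_eq hfζ0] at hδ
    rw [map_sub, ← hδ]
    ring
  rw [← hy2, hyζ]

lemma PadicInt.natCast_dvd_pow_sub_one_sub_one {α : ℤ_[p]} (hα : IsUnit α) :
    (p : ℤ_[p]) ∣ α ^ (p - 1) - 1 := by
  have hαZ : PadicInt.toZMod α ≠ 0 := (hα.map PadicInt.toZMod).ne_zero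
  have hker : α ^ (p - 1) - 1 ∈ RingHom.ker (PadicInt.toZMod (p := p)) := by
    rw [RingHom.mem_ker, map_sub, map_pow, map_one, ZMod.pow_card_sub_one_eq_one hαZ, sub_self]
  rwa [PadicInt.ker_toZMod, PadicInt.maximalIdeal_eq_span_p, Ideal.mem_span_singleton] at hker

lemma PadicInt.norm_natCast_eq_one_of_dvd_sub_one {o : ℕ} (ho : 0 < o) (hop : o ∣ p - 1) :
    ‖(o : ℤ_[p])‖ = 1 := by
  refine PadicInt.norm_natCast_eq_one_iff.2
    ((Nat.Prime.coprime_iff_not_dvd hp.out).2 fun hpo => ?_)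
  have := Nat.le_of_dvd ho hpo
  have := Nat.le_of_dvd (Nat.sub_pos_of_lt hp.out.one_lt) hop
  omega

lemma PadicInt.exists_pow_eq_one_norm_sub_eq {α : ℤ_[p]} (hα : ‖α‖ = 1) {o : ℕ}
    (ho : ‖(o : ℤ_[p])‖ = 1) (h : ‖α ^ o - 1‖ < 1) :
    ∃ ζ : ℤ_[p], ζ ^ o = 1 ∧ ‖α - ζ‖ = ‖α ^ o - 1‖ := by
  have hderiv : ‖(X ^ o - 1 : ℤ_[p][X]).derivative.aeval α‖ = 1 := by
    simp [derivative_X_pow, ho, hα]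
  obtain ⟨ζ, hζ, hζα, -⟩ := hensels_lemma (F := (X ^ o - 1 : ℤ_[p][X])) (a := α)
    (by rw [hderiv, one_pow]; simpa using h)
  replace hζ : ζ ^ o = 1 := by simpa [sub_eq_zero] using hζ
  have ho0 : o ≠ 0 := by rintro rfl; simp at ho
  have hζn : ‖ζ ^ (o - 1)‖ = 1 :=
    (isOfFinOrder_iff_pow_eq_one.2 ⟨o, Nat.pos_of_ne_zero ho0, hζ⟩).pow.norm_eq_one
  -- `β = α ζ⁻¹` has `β^o = α^o`, and `β^o - 1 = (β - 1) Σ βⁱ` with `‖Σ βⁱ‖ = 1`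
  set β := α * ζ ^ (o - 1)
  have hζinv : ζ * ζ ^ (o - 1) = 1 := by rw [← pow_succ', Nat.sub_add_cancel (by omega), hζ]
  have hβ1 : β - 1 = (α - ζ) * ζ ^ (o - 1) := by rw [sub_mul, hζinv]
  have hβo : β ^ o = α ^ o := by
    rw [mul_pow, ← pow_mul, mul_comm (o - 1), pow_mul, hζ, one_pow, mul_one]
  have hβnorm : ‖β - 1‖ = ‖α - ζ‖ := by rw [hβ1, norm_mul, hζn, mul_one]
  refine ⟨ζ, hζ, ?_⟩
  have hβ : ‖β - 1‖ < 1 := by rw [hβnorm, norm_sub_rev, ← hderiv]; exact hζα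
  rw [← hβo, ← geom_sum_mul, norm_mul, norm_geom_sum_eq_one hβ ho, one_mul, hβnorm]

lemma isRoot_map_tPoly_sq_div {α ζ : ℤ_[p]} (μ : ℕ) {k : ℕ} (hζ : ζ ^ k = 1) :
    ((tPoly p α μ k).map (algebraMap ℤ_[p] ℚ_[p])).IsRoot
      (algebraMap ℤ_[p] ℚ_[p] (ζ - α) ^ 2 / (p : ℚ_[p]) ^ μ) := by
  have hp0 : (p : ℚ_[p]) ^ μ ≠ 0 := pow_ne_zero _ (Nat.cast_ne_zero.2 hp.out.ne_zero)
  rw [IsRoot, eval_map]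
  refine tPoly_eval₂_eq_zero_of_add_pow_eq_one (y := algebraMap ℤ_[p] ℚ_[p] (ζ - α)) ?_ ?_
  · rw [map_natCast, div_mul_cancel₀ _ hp0]
  · rw [← map_add, add_sub_cancel, ← map_pow, hζ, map_one]

lemma le_norm_of_aeval_tPoly_eq_zero {L : Type*} [NormedField L] [Algebra ℚ_[p] L]
    (hiso : ∀ x : ℚ_[p], ‖algebraMap ℚ_[p] L x‖ = ‖x‖) {α ζ : ℤ_[p]} (hα : ‖α‖ = 1) (μ : ℕ)
    {k : ℕ} (hk : k ≠ 0) (hζ : ζ ^ k = 1) (hαζ : ‖α - ζ‖ < rootRadius p) {w : L}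
    (hw : aeval w ((tPoly p α μ k).map (algebraMap ℤ_[p] ℚ_[p])) = 0)
    (hwz : w ≠ algebraMap ℚ_[p] L (algebraMap ℤ_[p] ℚ_[p] (ζ - α) ^ 2 / (p : ℚ_[p]) ^ μ)) :
    (p : ℝ) ^ ((μ : ℝ) - 2 / ((p : ℝ) - 1)) ≤ ‖w‖ := by
  by_contra! hlt
  set f := (algebraMap ℚ_[p] L).comp (algebraMap ℤ_[p] ℚ_[p])
  have hf (a : ℤ_[p]) : ‖f a‖ = ‖a‖ := (hiso _).trans PadicInt.norm_def.symm
  have : IsUltrametricDist L := IsUltrametricDist.isUltrametricDist_of_forall_norm_natCast_le_one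
    fun n => by rw [← map_natCast f, hf]; exact PadicInt.norm_le_one _
  have hx : ‖w * f p ^ μ‖ < rootRadius p ^ 2 := by
    rw [norm_mul, norm_pow, hf, PadicInt.norm_p, inv_pow, ← div_eq_mul_inv,
      div_lt_iff₀ (pow_pos (Nat.cast_pos.2 hp.out.pos) _), rootRadius_sq_mul_pow]
    exact hlt
  have hwy := mul_pow_eq_sq_of_tPoly_eval₂_eq_zero hf hα μ hk hζ hαζ
    (by rwa [aeval_def, eval₂_map] at hw) hx
  have hpL : (p : L) ^ μ ≠ 0 := pow_ne_zero _ (by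
    rw [← map_natCast (algebraMap ℚ_[p] L)]
    exact (_root_.map_ne_zero _).2 (Nat.cast_ne_zero.2 hp.out.ne_zero))
  rw [map_natCast] at hwy
  apply hwz
  rw [map_div₀, map_pow, map_pow, map_natCast, eq_div_iff hpL]
  exact hwy

end Padic

theorem stmt_14_general (p : ℕ) [Fact p.Prime] (α : ℤ_[p]) (hα : IsUnit α) (μ : ℕ)
    (o : ℕ) (ho : 0 < o)
    (hoa : ∀ m : ℕ, 0 < m → ((p : ℤ_[p]) ∣ α ^ m - 1 ↔ o ∣ m))
    (hα1 : α ^ o ≠ 1)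
    (hv : (2 * ((α ^ o - 1).valuation : ℝ) - μ) > 2 / ((p : ℝ) - 1) - μ) :
    ∃ z : ℚ_[p],
      ‖z‖ = (p : ℝ) ^ ((μ : ℤ) - 2 * (α ^ o - 1).valuation) ∧
      ∀ k : ℕ, 1 ≤ k → o ∣ k →
        Polynomial.eval z ((tPoly p α μ k).map (algebraMap ℤ_[p] ℚ_[p])) = 0 ∧
        ∀ (L : Type) (_ : NormedField L) (_ : Algebra ℚ_[p] L),
          (∀ x : ℚ_[p], ‖algebraMap ℚ_[p] L x‖ = ‖x‖) →
          ∀ w : L, Polynomial.aeval w ((tPoly p α μ k).map (algebraMap ℤ_[p] ℚ_[p])) = 0 →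
            w ≠ algebraMap ℚ_[p] L z →
            (p : ℝ) ^ ((μ : ℝ) - 2 / ((p : ℝ) - 1)) ≤ ‖w‖ := by
  have hαn : ‖α‖ = 1 := PadicInt.isUnit_iff.1 hα
  have hon : ‖(o : ℤ_[p])‖ = 1 := PadicInt.norm_natCast_eq_one_of_dvd_sub_one ho
    ((hoa _ (Nat.sub_pos_of_lt (Fact.out : p.Prime).one_lt)).1
      (PadicInt.natCast_dvd_pow_sub_one_sub_one hα))
  obtain ⟨ζ, hζ, hαζ⟩ := PadicInt.exists_pow_eq_one_norm_sub_eq hαn hon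
    ((PadicInt.norm_lt_one_iff_dvd _).2 ((hoa o ho).2 dvd_rfl))
  rw [PadicInt.norm_eq_zpow_neg_valuation (sub_ne_zero.2 hα1)] at hαζ
  have hsmall : ‖α - ζ‖ < rootRadius p :=
    hαζ ▸ zpow_neg_lt_rootRadius (by rw [div_eq_mul_inv] at hv; push_cast; linarith)
  refine ⟨algebraMap ℤ_[p] ℚ_[p] (ζ - α) ^ 2 / (p : ℚ_[p]) ^ μ, ?_, fun k hk hok => ?_⟩
  · rw [norm_div, norm_pow, norm_pow, PadicInt.algebraMap_apply, ← PadicInt.norm_def,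
      norm_sub_rev, hαζ, Padic.norm_p, inv_pow, div_inv_eq_mul, ← zpow_natCast, ← zpow_natCast,
      ← zpow_mul,
      ← zpow_add₀ (Nat.cast_ne_zero.2 (Fact.out : p.Prime).ne_zero)]
    ring_nf
  · have hζk : ζ ^ k = 1 := by obtain ⟨d, rfl⟩ := hok; rw [pow_mul, hζ, one_pow]
    exact ⟨isRoot_map_tPoly_sq_div μ hζk, fun L _ _ hiso w hw hwz =>
      le_norm_of_aeval_tPoly_eq_zero hiso hαn μ (by omega) hζk hsmall hw hwz⟩

/-- Let `p` be an odd prime, `α ∈ ℤ_p^×` with `o = o_ᾱ`, `v_α = v(α^o - 1)`, and `μ ≥ 0`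
with `2v_α - μ > 2/(p-1) - μ`.  Then there is `z ∈ ℚ_p` of valuation `2v_α - μ`
(i.e. `‖z‖ = p^{μ - 2v_α}`), independent of `k`, which for every `k` divisible by `o` is a
root of `t_k = det(g^k - 1)`, and is the unique root of maximal valuation: every other
root of `t_k` (in any normed field extension) has valuation at most `2/(p-1) - μ`,
i.e. norm at least `p^{μ - 2/(p-1)}`... here stated as norm `≥` lower bound reversed:
valuation ≤ 2/(p-1) - μ means norm ≥ p^{μ - 2/(p-1)}. -/
theorem stmt_14 (p : ℕ) [Fact p.Prime] (hp : p ≠ 2) (α : ℤ_[p]) (hα : IsUnit α) (μ : ℕ)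
    (o : ℕ) (ho : 0 < o)
    (hoa : ∀ m : ℕ, 0 < m → ((p : ℤ_[p]) ∣ α ^ m - 1 ↔ o ∣ m))
    (hα1 : α ^ o ≠ 1)
    (hv : (2 * ((α ^ o - 1).valuation : ℝ) - μ) > 2 / ((p : ℝ) - 1) - μ) :
    ∃ z : ℚ_[p],
      ‖z‖ = (p : ℝ) ^ ((μ : ℤ) - 2 * (α ^ o - 1).valuation) ∧
      ∀ k : ℕ, 1 ≤ k → o ∣ k →
        Polynomial.eval z ((tPoly p α μ k).map (algebraMap ℤ_[p] ℚ_[p])) = 0 ∧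
        ∀ (L : Type) (_ : NormedField L) (_ : Algebra ℚ_[p] L),
          (∀ x : ℚ_[p], ‖algebraMap ℚ_[p] L x‖ = ‖x‖) →
          ∀ w : L, Polynomial.aeval w ((tPoly p α μ k).map (algebraMap ℤ_[p] ℚ_[p])) = 0 →
            w ≠ algebraMap ℚ_[p] L z →
            (p : ℝ) ^ ((μ : ℝ) - 2 / ((p : ℝ) - 1)) ≤ ‖w‖ :=
  stmt_14_general p α hα μ o ho hoa hα1 hv
end

section
/- Let p be an odd prime, n ≥ 1, α ∈ (ℤ/p^n)^×, and let D ⊆ GL₂(ℤ/p^n) be the group of matrices with rows (α^k a, b) and (0, α^{-k}) for 0 ≤ k < o_α, a ∈ (ℤ/p^n)^×, b ∈ ℤ/p^n, where o_α is the order of α. For w = (x,y)ᵗ with x, y ∈ ℤ/p^n and at least one a unit: if v(y) = 0 the stabilizer of w in D has order (p-1)p^{n-1}; if v(x) = 0 and 0 < v(y) < n it has order p^{min{n+v(y), 2n-v_α}}; and if v(x)=0 and y = 0 it has order o_ᾱ p^{2n-v_α}. -/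
/-!
The stabilizer condition splits into `α^k a x + b y = x` and `α^k y = y`. If `y` is a unit, the
second equation forces `k = 0` and the first one then determines `b` from `a`, leaving the
`(p-1)p^{n-1}` units `a`. If `x` is a unit and `p ∣ y`, then `x - b y` is a unit for every `b`, so
the first equation determines `a` from `(k, b)` and the count is `p^n` times the number of
`k < o_α` with `α^k y = y`. For `y = 0` every `k` qualifies. For `v(y) = w` with `0 < w < n` the
condition says that `α^k` lies in the kernel of reduction `(ℤ/p^n)^× → (ℤ/p^{n-w})^×`, a subgroup
of order `p^w`; since `(ℤ/p^n)^×` is cyclic for odd `p`, the number of such `k` is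
`gcd(o_α, p^w) = p^{min(w, n - v_α)}`.
-/

/-- The set of parameters `(k, a, b)` with `0 ≤ k < o_α`, `a ∈ (ℤ/p^n)^×`, `b ∈ ℤ/p^n`
whose associated matrix `!![α^k a, b; 0, α^{-k}]` fixes the vector `(x,y)ᵗ`. -/
def stab17 (p n : ℕ) (α : (ZMod (p ^ n))ˣ) (x y : ZMod (p ^ n)) : Type :=
  {t : Fin (orderOf α) × (ZMod (p ^ n))ˣ × ZMod (p ^ n) //
    (!![((α ^ (t.1 : ℕ) * t.2.1 : (ZMod (p ^ n))ˣ) : ZMod (p ^ n)), t.2.2;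
        0, ((α⁻¹ ^ (t.1 : ℕ) : (ZMod (p ^ n))ˣ) : ZMod (p ^ n))]).mulVec ![x, y] = ![x, y]}

theorem Matrix.upperTriangular_fin_two_mulVec_eq_self_iff {R : Type*} [CommRing R]
    (a b c x y : R) :
    (!![a, b; 0, c]).mulVec ![x, y] = ![x, y] ↔ a * x + b * y = x ∧ c * y = y := by
  rw [funext_iff, Fin.forall_fin_two]
  simp [Matrix.mulVec, dotProduct, Fin.sum_univ_two, mul_comm]

theorem Units.inv_mul_eq_self_iff {R : Type*} [Monoid R] (u : Rˣ) (y : R) :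
    (↑u⁻¹ : R) * y = y ↔ (u : R) * y = y := by
  rw [Units.inv_mul_eq_iff_eq_mul, eq_comm]

theorem Nat.gcd_pow_pow (p a b : ℕ) : Nat.gcd (p ^ a) (p ^ b) = p ^ min a b := by
  rcases le_total a b with h | h
  · rw [Nat.gcd_eq_left (pow_dvd_pow p h), min_eq_left h]
  · rw [Nat.gcd_eq_right (pow_dvd_pow p h), min_eq_right h]

section Cyclic

variable {G : Type*} [CommGroup G] [Finite G] [IsCyclic G]

theorem IsCyclic.mem_iff_pow_card_eq_one (K : Subgroup G) (g : G) :
    g ∈ K ↔ g ^ Nat.card K = 1 := by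
  have hle : K ≤ (powMonoidHom (Nat.card K) : G →* G).ker := fun g hg =>
    orderOf_dvd_iff_pow_eq_one.mp (K.orderOf_dvd_natCard hg)
  have hcard : Nat.card (powMonoidHom (Nat.card K) : G →* G).ker = Nat.card K := by
    rw [IsCyclic.card_powMonoidHom_ker, Nat.gcd_eq_right K.card_subgroup_dvd_card]
  exact (SetLike.ext_iff.mp (Subgroup.eq_of_le_of_card_ge hle hcard.le) g).trans <| by
    rw [MonoidHom.mem_ker, powMonoidHom_apply]

theorem IsCyclic.card_pow_mem_eq_gcd (K : Subgroup G) (g : G) :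
    Nat.card {k : Fin (orderOf g) // g ^ (k : ℕ) ∈ K} = (orderOf g).gcd (Nat.card K) := by
  let e : {k : Fin (orderOf g) // g ^ (k : ℕ) ∈ K} ≃
      (powMonoidHom (Nat.card K) : Subgroup.zpowers g →* Subgroup.zpowers g).ker :=
    (finEquivZPowers (isOfFinOrder_of_finite g)).subtypeEquiv fun k => by
      rw [MonoidHom.mem_ker, powMonoidHom_apply, IsCyclic.mem_iff_pow_card_eq_one K,
        Subtype.ext_iff]
      simp [finEquivZPowers_apply]
  rw [Nat.card_congr e, IsCyclic.card_powMonoidHom_ker, Nat.card_zpowers]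

end Cyclic

namespace ZMod

theorem isUnit_iff_not_natCast_dvd {p n : ℕ} (hp : p.Prime) (hn : n ≠ 0) (z : ZMod (p ^ n)) :
    IsUnit z ↔ ¬ (p : ZMod (p ^ n)) ∣ z := by
  have : NeZero (p ^ n) := ⟨pow_ne_zero n hp.ne_zero⟩
  refine ⟨fun hz hpz => prime_natCast_not_isUnit_pow hp (Nat.pos_of_ne_zero hn)
    (isUnit_of_dvd_unit hpz hz), fun hpz => ?_⟩
  rw [← natCast_zmod_val z, isUnit_natCast_iff_not_dvd_pow hp (Nat.pos_of_ne_zero hn)]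
  exact fun h => hpz (natCast_zmod_val z ▸ Nat.cast_dvd_cast h)

theorem mul_natCast_eq_zero_iff {N m d : ℕ} [NeZero N] (hN : m * d = N) (hd : d ≠ 0)
    (hm : m ∣ N) (z : ZMod N) : z * d = 0 ↔ castHom hm (ZMod m) z = 0 := by
  subst hN
  conv_lhs => rw [← natCast_zmod_val z, ← Nat.cast_mul, natCast_eq_zero_iff,
    Nat.mul_dvd_mul_iff_right (Nat.pos_of_ne_zero hd)]
  rw [castHom_apply, cast_eq_val, natCast_eq_zero_iff]

theorem isNilpotent_of_natCast_dvd {p n : ℕ} {y : ZMod (p ^ n)} (hy : (p : ZMod (p ^ n)) ∣ y) :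
    IsNilpotent y := by
  obtain ⟨r, rfl⟩ := hy
  exact (Commute.all _ _).isNilpotent_mul_right ⟨n, by rw [← Nat.cast_pow, natCast_self]⟩

variable {p : ℕ} [Fact p.Prime]

theorem natCard_units_prime_pow {n : ℕ} (hn : n ≠ 0) :
    Nat.card (ZMod (p ^ n))ˣ = p ^ (n - 1) * (p - 1) := by
  rw [Nat.card_eq_fintype_card, card_units_eq_totient, Nat.totient_prime_pow Fact.out
    (Nat.pos_of_ne_zero hn)]

theorem card_ker_unitsMap_prime_pow {n w : ℕ} (hw : w < n) :
    Nat.card (unitsMap (pow_dvd_pow p (Nat.sub_le n w))).ker = p ^ w := by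
  have hcard := (unitsMap (pow_dvd_pow p (Nat.sub_le n w))).ker.card_mul_index
  rw [Subgroup.index_ker, MonoidHom.range_eq_top.mpr (unitsMap_surjective _), Subgroup.card_top,
    natCard_units_prime_pow (by omega), natCard_units_prime_pow (by omega)] at hcard
  have hp := (Fact.out : p.Prime)
  have hpos : 0 < p ^ (n - w - 1) * (p - 1) :=
    Nat.mul_pos (pow_pos hp.pos _) (Nat.sub_pos_of_lt hp.one_lt)
  refine Nat.eq_of_mul_eq_mul_right hpos (hcard.trans ?_)
  rw [← mul_assoc, ← pow_add]
  congr 2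
  omega

theorem units_mul_eq_self_iff_mem_ker {n w : ℕ} (hw : w < n) {y : ZMod (p ^ n)}
    (hy : (p : ZMod (p ^ n)) ^ w ∣ y) (hy' : ¬ (p : ZMod (p ^ n)) ^ (w + 1) ∣ y)
    (u : (ZMod (p ^ n))ˣ) :
    (u : ZMod (p ^ n)) * y = y ↔ u ∈ (unitsMap (pow_dvd_pow p (Nat.sub_le n w))).ker := by
  obtain ⟨c, rfl⟩ := hy
  have hc : IsUnit c := (isUnit_iff_not_natCast_dvd Fact.out (by omega) c).mpr
    fun ⟨r, hr⟩ => hy' ⟨r, by rw [hr, pow_succ, mul_assoc]⟩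
  rw [MonoidHom.mem_ker, Units.ext_iff, unitsMap_val, Units.val_one, ← sub_eq_zero,
    show (u : ZMod (p ^ n)) * (p ^ w * c) - p ^ w * c = ((u : ZMod (p ^ n)) - 1) * (p ^ w : ℕ) * c
      by push_cast; ring,
    hc.mul_left_eq_zero, mul_natCast_eq_zero_iff (pow_sub_mul_pow p hw.le)
      (pow_ne_zero w (Fact.out : p.Prime).ne_zero) (pow_dvd_pow p (Nat.sub_le n w)),
    map_sub, map_one, sub_eq_zero, castHom_apply]

end ZMod

section Stabilizer

variable {p n : ℕ} (α : (ZMod (p ^ n))ˣ)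

def stab17Equiv (x y : ZMod (p ^ n)) :
    stab17 p n α x y ≃ {t : Fin (orderOf α) × (ZMod (p ^ n))ˣ × ZMod (p ^ n) //
      ((α ^ (t.1 : ℕ) * t.2.1 : (ZMod (p ^ n))ˣ) : ZMod (p ^ n)) * x + t.2.2 * y = x ∧
        ((α ^ (t.1 : ℕ) : (ZMod (p ^ n))ˣ) : ZMod (p ^ n)) * y = y} :=
  Equiv.subtypeEquivRight fun _ => by
    rw [Matrix.upperTriangular_fin_two_mulVec_eq_self_iff, inv_pow, Units.inv_mul_eq_self_iff]

theorem card_stab17_of_isUnit_right [NeZero (p ^ n)] (x : ZMod (p ^ n)) {y : ZMod (p ^ n)}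
    (hy : IsUnit y) : Nat.card (stab17 p n α x y) = Nat.card (ZMod (p ^ n))ˣ := by
  obtain ⟨yu, rfl⟩ := hy
  have hk : ∀ k : Fin (orderOf α),
      ((α ^ (k : ℕ) : (ZMod (p ^ n))ˣ) : ZMod (p ^ n)) * yu = yu ↔ k = ⟨0, orderOf_pos α⟩ := by
    intro k
    rw [← Units.val_mul, Units.val_inj, mul_eq_right, Fin.ext_iff]
    exact ⟨fun h => by_contra fun hk => pow_ne_one_of_lt_orderOf hk k.2 h,
      fun h => by rw [h, pow_zero]⟩
  refine Nat.card_congr ((stab17Equiv α x yu).trans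
    { toFun := fun t => t.1.2.1
      invFun := fun a => ⟨(⟨0, orderOf_pos α⟩, a, (x - a * x) * ↑yu⁻¹), ?_, (hk _).mpr rfl⟩
      left_inv := ?_
      right_inv := fun _ => rfl })
  · simp only [pow_zero, one_mul, mul_assoc, Units.inv_mul, mul_one]
    ring
  · rintro ⟨⟨k, a, b⟩, hab, hyk⟩
    obtain rfl := (hk k).mp hyk
    simp only [pow_zero, one_mul] at hab
    have hb : b = (x - a * x) * ↑yu⁻¹ := by
      rw [← eq_sub_of_add_eq' hab, mul_assoc, Units.mul_inv, mul_one]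
    subst hb
    rfl

theorem card_stab17_of_isUnit_left {x y : ZMod (p ^ n)} (hx : IsUnit x) (hy : IsNilpotent y) :
    Nat.card (stab17 p n α x y) = Nat.card {k : Fin (orderOf α) //
      ((α ^ (k : ℕ) : (ZMod (p ^ n))ˣ) : ZMod (p ^ n)) * y = y} * p ^ n := by
  obtain ⟨xu, rfl⟩ := hx
  have hu : ∀ b : ZMod (p ^ n), IsUnit ((xu : ZMod (p ^ n)) - b * y) := fun b => by
    rw [sub_eq_add_neg]
    exact ((Commute.all b y).isNilpotent_mul_left hy).neg.isUnit_add_left_of_commute xu.isUnit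
      (Commute.all _ _)
  have ha : ∀ (c a : (ZMod (p ^ n))ˣ) (b : ZMod (p ^ n)),
      ((c * a : (ZMod (p ^ n))ˣ) : ZMod (p ^ n)) * xu + b * y = xu ↔
        a = c⁻¹ * (hu b).unit * xu⁻¹ := fun c a b => by
    rw [← eq_sub_iff_add_eq]
    conv_lhs => rw [← (hu b).unit_spec, ← Units.val_mul, Units.val_inj]
    rw [eq_mul_inv_iff_mul_eq, eq_inv_mul_iff_mul_eq, mul_assoc]
  suffices e : stab17 p n α xu y ≃ {k : Fin (orderOf α) //
      ((α ^ (k : ℕ) : (ZMod (p ^ n))ˣ) : ZMod (p ^ n)) * y = y} × ZMod (p ^ n) by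
    rw [Nat.card_congr e, Nat.card_prod, Nat.card_zmod]
  exact (stab17Equiv α xu y).trans
    { toFun := fun t => (⟨t.1.1, t.2.2⟩, t.1.2.2)
      invFun := fun kb => ⟨(kb.1.1, (α ^ (kb.1.1 : ℕ))⁻¹ * (hu kb.2).unit * xu⁻¹, kb.2),
        (ha _ _ _).mpr rfl, kb.1.2⟩
      left_inv := fun ⟨⟨_, a, b⟩, hab, _⟩ =>
        Subtype.ext (Prod.ext rfl (Prod.ext ((ha _ a b).mp hab).symm rfl))
      right_inv := fun _ => rfl }

theorem card_stab17_of_pow_dvd [Fact p.Prime] (hp : p ≠ 2) {w : ℕ} (hw0 : 0 < w) (hwn : w < n)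
    {x y : ZMod (p ^ n)} (hx : IsUnit x) (hy : (p : ZMod (p ^ n)) ^ w ∣ y)
    (hy' : ¬ (p : ZMod (p ^ n)) ^ (w + 1) ∣ y) :
    Nat.card (stab17 p n α x y) = (orderOf α).gcd (p ^ w) * p ^ n := by
  have : IsCyclic (ZMod (p ^ n))ˣ := ZMod.isCyclic_units_of_prime_pow p Fact.out hp n
  have hnil : IsNilpotent y :=
    ZMod.isNilpotent_of_natCast_dvd ((dvd_pow_self _ hw0.ne').trans hy)
  rw [card_stab17_of_isUnit_left α hx hnil, Nat.card_congr (Equiv.subtypeEquivRight fun _ =>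
      ZMod.units_mul_eq_self_iff_mem_ker hwn hy hy' _), IsCyclic.card_pow_mem_eq_gcd,
    ZMod.card_ker_unitsMap_prime_pow hwn]

end Stabilizer

theorem stmt_17_general (p n : ℕ) [Fact p.Prime] (hp : p ≠ 2) (hn : 1 ≤ n)
    (α : (ZMod (p ^ n))ˣ)
    (v : ZMod (p ^ n) → ℕ)
    (hv : ∀ (y : ZMod (p ^ n)) (t : ℕ), ((p : ZMod (p ^ n)) ^ t ∣ y ∧ t ≤ n) ↔ t ≤ v y)
    (oab vα : ℕ) (hoab : ¬ p ∣ oab) (hvα : vα ≤ n)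
    (hfact : orderOf α = oab * p ^ (n - vα))
    (x y : ZMod (p ^ n)) :
    (v y = 0 → Nat.card (stab17 p n α x y) = (p - 1) * p ^ (n - 1)) ∧
    (v x = 0 → 0 < v y → v y < n →
        Nat.card (stab17 p n α x y) = p ^ min (n + v y) (2 * n - vα)) ∧
    (v x = 0 → y = 0 → Nat.card (stab17 p n α x y) = oab * p ^ (2 * n - vα)) := by
  have hunit : ∀ z, v z = 0 → IsUnit z := fun z hz =>
    (ZMod.isUnit_iff_not_natCast_dvd Fact.out (by omega) z).mpr fun h =>
      absurd ((hv z 1).mp ⟨by rwa [pow_one], hn⟩) (by omega)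
  refine ⟨fun hy => ?_, fun hx hy0 hyn => ?_, fun hx hy => ?_⟩
  · rw [card_stab17_of_isUnit_right α x (hunit y hy), ZMod.natCard_units_prime_pow (by omega),
      mul_comm]
  · have hy' : ¬ (p : ZMod (p ^ n)) ^ (v y + 1) ∣ y := fun h =>
      absurd ((hv y _).mp ⟨h, hyn⟩) (by omega)
    have hcop : oab.Coprime (p ^ v y) :=
      (((Nat.Prime.coprime_iff_not_dvd Fact.out).mpr hoab).symm).pow_right _
    rw [card_stab17_of_pow_dvd α hp hy0 hyn (hunit x hx) ((hv y _).mpr le_rfl).1 hy', hfact,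
      hcop.gcd_mul_left_cancel, Nat.gcd_pow_pow, ← pow_add]
    congr 1
    omega
  · subst hy
    rw [card_stab17_of_isUnit_left α (hunit x hx) IsNilpotent.zero,
      Nat.card_congr (Equiv.subtypeUnivEquiv fun _ => mul_zero _), Nat.card_fin, hfact, mul_assoc,
      ← pow_add]
    congr 2
    omega

/-- Let `p` be an odd prime, `n ≥ 1`, `α ∈ (ℤ/p^n)^×`, and let
`D = {!![α^k a, b; 0, α^{-k}] : 0 ≤ k < o_α, a ∈ (ℤ/p^n)^×, b ∈ ℤ/p^n}` act on column
vectors.  Write `o_α = o_ᾱ p^{n-v_α}` with `p ∤ o_ᾱ`, and let `v` be the truncated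
`p`-adic valuation on `ℤ/p^n` (so `v(0) = n`).  For `w = (x,y)ᵗ` with `x` or `y` a unit:
if `v(y) = 0` the stabilizer of `w` in `D` has order `(p-1)p^{n-1}`; if `v(x) = 0` and
`0 < v(y) < n` it has order `p^{min(n+v(y), 2n-v_α)}`; and if `v(x) = 0` and `y = 0` it has
order `o_ᾱ p^{2n-v_α}`. -/
theorem stmt_17 (p n : ℕ) [Fact p.Prime] (hp : p ≠ 2) (hn : 1 ≤ n)
    (α : (ZMod (p ^ n))ˣ)
    (v : ZMod (p ^ n) → ℕ)
    (hv : ∀ (y : ZMod (p ^ n)) (t : ℕ), ((p : ZMod (p ^ n)) ^ t ∣ y ∧ t ≤ n) ↔ t ≤ v y)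
    (oab vα : ℕ) (hoab : ¬ p ∣ oab) (hvα : vα ≤ n)
    (hfact : orderOf α = oab * p ^ (n - vα))
    (x y : ZMod (p ^ n)) (hw : IsUnit x ∨ IsUnit y) :
    (v y = 0 → Nat.card (stab17 p n α x y) = (p - 1) * p ^ (n - 1)) ∧
    (v x = 0 → 0 < v y → v y < n →
        Nat.card (stab17 p n α x y) = p ^ min (n + v y) (2 * n - vα)) ∧
    (v x = 0 → y = 0 → Nat.card (stab17 p n α x y) = oab * p ^ (2 * n - vα)) :=
  stmt_17_general p n hp hn α v hv oab vα hoab hvα hfact x y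
end

section
/- Let g ∈ GL₂(ℤ/p^n) (p odd) have irreducible characteristic polynomial of unit discriminant, and let o_g be the order of g. Then every orbit of the cyclic group ⟨g⟩ acting on W = {(x,y)ᵗ ∈ (ℤ/p^n)² : x or y a unit} has size exactly o_g. -/
/-!
Reduced modulo `p`, the matrix `g` has irreducible characteristic polynomial, hence no
eigenvector, so for `w ∈ W` the vectors `w, g w` reduce to a basis of `𝔽_p²`; as `ℤ/p^n` is
local, they form a basis of `(ℤ/p^n)²`. An element of `⟨g⟩` fixing `w` commutes with `g`, so it
also fixes `g w` and is therefore the identity. The stabiliser of `w` in `⟨g⟩` being trivial, the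
orbit of `w` has `o_g` elements.
-/

open Matrix Polynomial

lemma ZMod.isLocalHom_castHom_pow {p : ℕ} [Fact p.Prime] {n : ℕ} (hn : n ≠ 0) :
    IsLocalHom (ZMod.castHom (dvd_pow_self p hn) (ZMod p)) := by
  refine ⟨fun x hx => ?_⟩
  rw [← ZMod.natCast_zmod_val x, ZMod.isUnit_iff_coprime,
    Nat.coprime_pow_right_iff (Nat.pos_of_ne_zero hn), Nat.coprime_comm,
    (Fact.out : p.Prime).coprime_iff_not_dvd, ← ZMod.natCast_eq_zero_iff]
  rw [← ZMod.natCast_zmod_val x, map_natCast] at hx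
  exact hx.ne_zero

namespace Matrix

lemma det_of_mulVec_ne_zero_of_irreducible_charpoly {F : Type*} [Field F]
    {N : Matrix (Fin 2) (Fin 2) F} (hN : Irreducible N.charpoly) {v : Fin 2 → F} (hv : v ≠ 0) :
    (of ![v, N *ᵥ v]).det ≠ 0 := by
  intro hdet
  obtain ⟨c, hc, hcv⟩ := exists_vecMul_eq_zero_iff.mpr hdet
  have hcomb : c 0 • v + c 1 • N *ᵥ v = 0 := by
    rw [← hcv]; ext i; fin_cases i <;> simp [vecMul, dotProduct, Fin.sum_univ_two]
  have hc1 : c 1 ≠ 0 := by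
    intro h1
    have h0 : c 0 ≠ 0 := fun h0 => hc (by ext i; fin_cases i <;> simp [h0, h1])
    simp [h1, h0, hv] at hcomb
  set t := -(c 0 / c 1)
  have hNv : N *ᵥ v = t • v := by
    refine smul_right_injective _ hc1 ?_
    dsimp only
    rw [smul_smul, show c 1 * t = -c 0 by rw [mul_neg, mul_div_cancel₀ _ hc1], neg_smul]
    exact eq_neg_of_add_eq_zero_right hcomb
  have heig : (scalar (Fin 2) t - N) *ᵥ v = 0 := by
    rw [sub_mulVec, hNv, scalar_apply, ← smul_one_eq_diagonal, smul_mulVec, one_mulVec, sub_self]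
  have hroot : N.charpoly.IsRoot t := by
    rw [IsRoot, eval_charpoly, ← exists_mulVec_eq_zero_iff]
    exact ⟨v, hv, heig⟩
  simpa [charpoly_degree_eq_dim] using degree_eq_one_of_irreducible_of_root hN hroot

lemma isUnit_det_of_mulVec_of_irreducible_charpoly_map {R K : Type*} [CommRing R] [Field K]
    (f : R →+* K) [IsLocalHom f] {M : Matrix (Fin 2) (Fin 2) R}
    (hM : Irreducible (M.charpoly.map f))
    {w : Fin 2 → R} (hw : ∃ i, IsUnit (w i)) : IsUnit (of ![w, M *ᵥ w]).det := by
  refine (isUnit_map_iff f _).mp (isUnit_iff_ne_zero.mpr ?_)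
  have hmap : f.mapMatrix (of ![w, M *ᵥ w]) = of ![f ∘ w, M.map f *ᵥ (f ∘ w)] := by
    ext i j; fin_cases i <;> simp [RingHom.map_mulVec, -mulVec_fin_two]
  rw [RingHom.map_det, hmap]
  refine det_of_mulVec_ne_zero_of_irreducible_charpoly (by rwa [charpoly_map]) ?_
  obtain ⟨i, hi⟩ := hw
  exact fun h => (hi.map f).ne_zero (congrFun h i)

lemma eq_one_of_commute_of_mulVec_eq_self {R : Type*} [CommRing R]
    {M A : Matrix (Fin 2) (Fin 2) R} {w : Fin 2 → R}
    (hdet : IsUnit (of ![w, M *ᵥ w]).det) (hAM : Commute A M) (hAw : A *ᵥ w = w) : A = 1 := by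
  set Q := (of ![w, M *ᵥ w])ᵀ
  have hAMw : A *ᵥ (M *ᵥ w) = M *ᵥ w := by
    rw [mulVec_mulVec, hAM.eq, ← mulVec_mulVec, hAw]
  have hQ : A * Q = Q := by
    ext i j
    fin_cases j
    · simpa [Q, mul_apply, mulVec, dotProduct] using congrFun hAw i
    · simpa [Q, mul_apply, mulVec, dotProduct, -mulVec_fin_two] using congrFun hAMw i
  have hQdet : IsUnit Q.det := by rwa [det_transpose]
  calc A = A * Q * Q⁻¹ := (mul_nonsing_inv_cancel_right Q A hQdet).symm
    _ = 1 := by rw [hQ, mul_nonsing_inv Q hQdet]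

end Matrix

lemma MulAction.card_powers_orbit_eq_orderOf {G X : Type*} [Group G] [MulAction G X] {g : G}
    (hg : IsOfFinOrder g) {x : X} (hfree : ∀ h ∈ Subgroup.zpowers g, h • x = x → h = 1) :
    Nat.card {y // ∃ m : ℕ, g ^ m • x = y} = orderOf g := by
  let f : Fin (orderOf g) → {y // ∃ m : ℕ, g ^ m • x = y} := fun i => ⟨g ^ (i : ℕ) • x, i, rfl⟩
  have hinj : f.Injective := by
    intro i j hij
    have hx : ((g ^ (j : ℕ))⁻¹ * g ^ (i : ℕ)) • x = x := by
      rw [mul_smul, inv_smul_eq_iff]; exact congrArg Subtype.val hij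
    have hmem : (g ^ (j : ℕ))⁻¹ * g ^ (i : ℕ) ∈ Subgroup.zpowers g :=
      mul_mem (inv_mem (Subgroup.npow_mem_zpowers g j)) (Subgroup.npow_mem_zpowers g i)
    exact Fin.ext <|
      pow_injOn_Iio_orderOf i.isLt j.isLt (inv_mul_eq_one.mp (hfree _ hmem hx)).symm
  have hsurj : f.Surjective := by
    rintro ⟨y, m, rfl⟩
    exact ⟨⟨m % orderOf g, Nat.mod_lt _ hg.orderOf_pos⟩,
      Subtype.ext (by simp [f, pow_mod_orderOf])⟩
  rw [← Nat.card_eq_of_bijective f ⟨hinj, hsurj⟩, Nat.card_fin]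

theorem stmt_19_general (p n : ℕ) [Fact p.Prime] (hn : 1 ≤ n)
    (g : GL (Fin 2) (ZMod (p ^ n)))
    (hirr : Irreducible
        (((g : Matrix (Fin 2) (Fin 2) (ZMod (p ^ n))).charpoly).map
          (ZMod.castHom (dvd_pow_self p (Nat.one_le_iff_ne_zero.mp hn)) (ZMod p)))) :
    ∀ w : Fin 2 → ZMod (p ^ n), IsUnit (w 0) ∨ IsUnit (w 1) →
      Nat.card {w' : Fin 2 → ZMod (p ^ n) //
          ∃ m : ℕ, ((g ^ m : GL (Fin 2) (ZMod (p ^ n))) :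
            Matrix (Fin 2) (Fin 2) (ZMod (p ^ n))).mulVec w = w'} = orderOf g := by
  intro w hw
  have := ZMod.isLocalHom_castHom_pow (p := p) (Nat.one_le_iff_ne_zero.mp hn)
  have hdet :=
    isUnit_det_of_mulVec_of_irreducible_charpoly_map _ hirr (hw.elim (⟨0, ·⟩) (⟨1, ·⟩))
  refine MulAction.card_powers_orbit_eq_orderOf (isOfFinOrder_of_finite g) fun h hh hhw => ?_
  obtain ⟨k, rfl⟩ := Subgroup.mem_zpowers_iff.mp hh
  exact Units.ext <|
    eq_one_of_commute_of_mulVec_eq_self hdet ((Commute.refl g).zpow_left k).units_val hhw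

/-- Let `p` be an odd prime and `g ∈ GL₂(ℤ/p^n)` whose characteristic polynomial is
irreducible modulo `p` and has unit discriminant.  Then every orbit of the cyclic group
`⟨g⟩` acting on `W = {(x,y)ᵗ ∈ (ℤ/p^n)² : x or y a unit}` has size exactly the order of
`g`. -/
theorem stmt_19 (p n : ℕ) [Fact p.Prime] (hp : p ≠ 2) (hn : 1 ≤ n)
    (g : GL (Fin 2) (ZMod (p ^ n)))
    (hirr : Irreducible
        (((g : Matrix (Fin 2) (Fin 2) (ZMod (p ^ n))).charpoly).map
          (ZMod.castHom (dvd_pow_self p (Nat.one_le_iff_ne_zero.mp hn)) (ZMod p))))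
    (hdisc : IsUnit
        ((Matrix.trace (g : Matrix (Fin 2) (Fin 2) (ZMod (p ^ n)))) ^ 2 -
          4 * (g : Matrix (Fin 2) (Fin 2) (ZMod (p ^ n))).det)) :
    ∀ w : Fin 2 → ZMod (p ^ n), IsUnit (w 0) ∨ IsUnit (w 1) →
      Nat.card {w' : Fin 2 → ZMod (p ^ n) //
          ∃ m : ℕ, ((g ^ m : GL (Fin 2) (ZMod (p ^ n))) :
            Matrix (Fin 2) (Fin 2) (ZMod (p ^ n))).mulVec w = w'} = orderOf g :=
  stmt_19_general p n hn g hirr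
end
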